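/- arXiv:2507.06859 — 10 statements merged into one kernel-verified Lean document; each statement's English description precedes it below -/
import Mathlib

section
/- For the Optimistic-DP value functions: for every h ∈ {1,…,H}, every b ∈ {1,…,LH}, and every integer e with 1 ≤ e ≤ min(b, L), one has 0 ≤ Û_h(b) − Û_h(b−e) ≤ 2·r_max·L. This holds with certainty, i.e., for every choice of the confidence bound functions p, q and of the sample contexts (θ_{h,s}). -/
/-- For the Optimistic-DP value functions, for every `h ∈ {1,…,H}`,
`b ∈ {1,…,LH}` and integer `e` with `1 ≤ e ≤ min b L`, one has
`0 ≤ Û_h(b) − Û_h(b−e) ≤ 2·r_max·L`, for every choice of the confidence bounds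
`p, q` and of the sample contexts `θs`. -/
theorem optimistic_dp_monotone_lipschitz
    {Θ 𝒜 : Type*} [Fintype Θ] [Fintype 𝒜] [Nonempty Θ] [Nonempty 𝒜]
    (θnull : Θ) (anull : 𝒜)
    (H L : ℕ) (hH : 0 < H) (hL : 0 < L)
    (rmax : ℝ) (hrmax : 0 < rmax)
    (r : Θ → 𝒜 → ℝ) (hr_le : ∀ θ a, r θ a ≤ rmax) (hr_null : ∀ θ, r θ anull = 0)
    (d : Θ → 𝒜 → ℕ) (hd_le : ∀ θ a, d θ a ≤ L) (hd_null : ∀ θ, d θ anull = 0)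
    (p q : Θ → 𝒜 → ℝ)
    (hp : ∀ θ a, p θ a ∈ Set.Icc (0 : ℝ) 1) (hq : ∀ θ a, q θ a ∈ Set.Icc (0 : ℝ) 1)
    {S : Type*} [Fintype S] [Nonempty S]
    (θs : ℕ → S → Θ)
    (Vhat : ℕ → ℕ → Θ → ℝ) (Uhat : ℕ → ℕ → ℝ)
    (hUtop : ∀ b ≤ L * H, Uhat (H + 1) b = 0)
    (hVmax : ∀ h ∈ Finset.Icc 1 H, ∀ b ≤ L * H, ∀ θ : Θ,
      IsGreatest ((fun a => q θ a * r θ a + p θ a * Uhat (h + 1) (b - d θ a)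
          + (1 - p θ a) * Uhat (h + 1) b) '' {a : 𝒜 | 0 ≤ r θ a ∧ d θ a ≤ b})
        (Vhat h b θ))
    (hUdef : ∀ h ∈ Finset.Icc 1 H, ∀ b ≤ L * H,
      Uhat h b = min ((∑ s : S, Vhat h b (θs h s)) / (Fintype.card S : ℝ))
        (((min b (H - h + 1) : ℕ) : ℝ) * rmax)) :
    ∀ h ∈ Finset.Icc 1 H, ∀ b ∈ Finset.Icc 1 (L * H), ∀ e ∈ Finset.Icc 1 (min b L),
      0 ≤ Uhat h b - Uhat h (b - e) ∧ Uhat h b - Uhat h (b - e) ≤ 2 * rmax * (L : ℝ) := by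
  have hcard : (0:ℝ) < (Fintype.card S : ℝ) := by
    exact_mod_cast Fintype.card_pos
  have hLpos : (0:ℝ) < (L:ℝ) := by exact_mod_cast hL
  have hmin : ∀ x y x' y' : ℝ, x - x' ≤ 2*rmax*L → y - y' ≤ 2*rmax*L →
      min x y - min x' y' ≤ 2*rmax*L := by
    intro x y x' y' h1 h2
    rcases le_total x' y' with h | h
    · rw [min_eq_left h]; have := min_le_left x y; linarith
    · rw [min_eq_right h]; have := min_le_right x y; linarith
  have key : ∀ n h, h + n = H + 1 → 1 ≤ h →
      (∀ b, b ≤ L * H → 0 ≤ Uhat h b ∧ Uhat h b ≤ ((min b (H - h + 1) : ℕ) : ℝ) * rmax) ∧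
      (∀ b' b, b' ≤ b → b ≤ L * H → Uhat h b' ≤ Uhat h b) ∧
      (∀ b, b ≤ L * H → ∀ e, 1 ≤ e → e ≤ b → e ≤ L →
        Uhat h b - Uhat h (b - e) ≤ 2 * rmax * (L:ℝ)) := by
    intro n
    induction n with
    | zero =>
      intro h hhn _
      have hh : h = H + 1 := by omega
      subst hh
      refine ⟨fun b hb => ?_, fun b' b hbb hb => ?_, fun b hb e he1 heb heL => ?_⟩
      · rw [hUtop b hb]; exact ⟨le_refl _, by positivity⟩
      · rw [hUtop b hb, hUtop b' (by omega)]
      · rw [hUtop b hb, hUtop (b - e) (by omega)]; simp; positivity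
    | succ n ih =>
      intro h hhn hh1
      have hmem : h ∈ Finset.Icc 1 H := Finset.mem_Icc.mpr ⟨hh1, by omega⟩
      obtain ⟨IHb, IHmono, IHlip⟩ := ih (h+1) (by omega) (by omega)
      -- Vhat facts
      have hVub : ∀ b, b ≤ L*H → ∀ θ (a : 𝒜), 0 ≤ r θ a → d θ a ≤ b →
          q θ a * r θ a + p θ a * Uhat (h+1) (b - d θ a)
            + (1 - p θ a) * Uhat (h+1) b ≤ Vhat h b θ := by
        intro b hb θ a h1 h2
        exact (hVmax h hmem b hb θ).2 ⟨a, ⟨h1, h2⟩, rfl⟩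
      have hVmem : ∀ b, b ≤ L*H → ∀ θ, ∃ a : 𝒜, 0 ≤ r θ a ∧ d θ a ≤ b ∧
          Vhat h b θ = q θ a * r θ a + p θ a * Uhat (h+1) (b - d θ a)
            + (1 - p θ a) * Uhat (h+1) b := by
        intro b hb θ
        obtain ⟨a, ha, hval⟩ := (hVmax h hmem b hb θ).1
        exact ⟨a, ha.1, ha.2, hval.symm⟩
      have hVnonneg : ∀ b, b ≤ L*H → ∀ θ, 0 ≤ Vhat h b θ := by
        intro b hb θ
        have h0 := hVub b hb θ anull (le_of_eq (hr_null θ).symm) (by rw [hd_null]; omega)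
        rw [hr_null, hd_null, Nat.sub_zero] at h0
        have hU0 := (IHb b hb).1
        nlinarith [h0]
      have hVmono : ∀ b' b, b' ≤ b → b ≤ L*H → ∀ θ, Vhat h b' θ ≤ Vhat h b θ := by
        intro b' b hbb hb θ
        obtain ⟨a, har, had, heq⟩ := hVmem b' (le_trans hbb hb) θ
        have h1 : Uhat (h+1) (b' - d θ a) ≤ Uhat (h+1) (b - d θ a) :=
          IHmono _ _ (by omega) (by omega)
        have h2 : Uhat (h+1) b' ≤ Uhat (h+1) b := IHmono _ _ hbb hb
        have h3 := hVub b hb θ a har (le_trans had hbb)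
        have hpa := hp θ a
        rw [heq]
        have t1 : p θ a * Uhat (h+1) (b' - d θ a) ≤ p θ a * Uhat (h+1) (b - d θ a) :=
          mul_le_mul_of_nonneg_left h1 hpa.1
        have t2 : (1 - p θ a) * Uhat (h+1) b' ≤ (1 - p θ a) * Uhat (h+1) b :=
          mul_le_mul_of_nonneg_left h2 (by have := hpa.2; linarith)
        linarith
      have hVlip : ∀ b, b ≤ L*H → ∀ e, 1 ≤ e → e ≤ L → e + L ≤ b → ∀ θ,
          Vhat h b θ - Vhat h (b - e) θ ≤ 2*rmax*(L:ℝ) := by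
        intro b hb e he1 heL heb θ
        obtain ⟨a, har, had, heq⟩ := hVmem b hb θ
        have hdL := hd_le θ a
        have h3 := hVub (b-e) (by omega) θ a har (by omega)
        have hsub : b - e - d θ a = b - d θ a - e := by omega
        rw [hsub] at h3
        have h1 : Uhat (h+1) (b - d θ a) - Uhat (h+1) (b - d θ a - e) ≤ 2*rmax*(L:ℝ) :=
          IHlip _ (by omega) e he1 (by omega) heL
        have h2 : Uhat (h+1) b - Uhat (h+1) (b - e) ≤ 2*rmax*(L:ℝ) :=
          IHlip b hb e he1 (by omega) heL
        have hpa := hp θ a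
        have t1 : p θ a * (Uhat (h+1) (b - d θ a) - Uhat (h+1) (b - d θ a - e))
            ≤ p θ a * (2*rmax*(L:ℝ)) := mul_le_mul_of_nonneg_left h1 hpa.1
        have t2 : (1 - p θ a) * (Uhat (h+1) b - Uhat (h+1) (b - e))
            ≤ (1 - p θ a) * (2*rmax*(L:ℝ)) :=
          mul_le_mul_of_nonneg_left h2 (by have := hpa.2; linarith)
        rw [heq]
        nlinarith [t1, t2, h3]
      -- Uhat facts
      have hA : ∀ b, b ≤ L*H → 0 ≤ Uhat h b := by
        intro b hb
        rw [hUdef h hmem b hb]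
        apply le_min
        · apply div_nonneg _ hcard.le
          exact Finset.sum_nonneg fun s _ => hVnonneg b hb (θs h s)
        · positivity
      have hB : ∀ b, b ≤ L*H → Uhat h b ≤ ((min b (H - h + 1):ℕ):ℝ) * rmax := by
        intro b hb; rw [hUdef h hmem b hb]; exact min_le_right _ _
      have hMono : ∀ b' b, b' ≤ b → b ≤ L*H → Uhat h b' ≤ Uhat h b := by
        intro b' b hbb hb
        rw [hUdef h hmem b' (by omega), hUdef h hmem b hb]
        apply min_le_min
        · apply div_le_div_of_nonneg_right ?_ hcard.le  -- may need renaming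
          exact Finset.sum_le_sum fun s _ => hVmono b' b hbb hb (θs h s)
        · have hnat : min b' (H - h + 1) ≤ min b (H - h + 1) := by omega
          have : ((min b' (H - h + 1):ℕ):ℝ) ≤ ((min b (H - h + 1):ℕ):ℝ) := by
            exact_mod_cast hnat
          nlinarith
      have hLip : ∀ b, b ≤ L*H → ∀ e, 1 ≤ e → e ≤ b → e ≤ L →
          Uhat h b - Uhat h (b - e) ≤ 2*rmax*(L:ℝ) := by
        intro b hb e he1 heb heL
        by_cases hcase : e + L ≤ b
        · rw [hUdef h hmem b hb, hUdef h hmem (b-e) (by omega)]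
          apply hmin
          · have hsumle : (∑ s : S, Vhat h b (θs h s)) - (∑ s : S, Vhat h (b-e) (θs h s))
                ≤ (Fintype.card S : ℝ) * (2*rmax*(L:ℝ)) := by
              rw [← Finset.sum_sub_distrib]
              calc ∑ s : S, (Vhat h b (θs h s) - Vhat h (b-e) (θs h s))
                  ≤ ∑ _s : S, 2*rmax*(L:ℝ) :=
                    Finset.sum_le_sum fun s _ => hVlip b hb e he1 heL hcase (θs h s)
                _ = (Fintype.card S : ℝ) * (2*rmax*(L:ℝ)) := by
                    rw [Finset.sum_const, Finset.card_univ, nsmul_eq_mul]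
            rw [div_sub_div_same]
            rw [div_le_iff₀ hcard]
            linarith
          · have hnat : min b (H - h + 1) ≤ min (b - e) (H - h + 1) + e := by omega
            have c1 : ((min b (H - h + 1):ℕ):ℝ) ≤ ((min (b-e) (H - h + 1):ℕ):ℝ) + (e:ℝ) := by
              exact_mod_cast hnat
            have ce : (e:ℝ) ≤ (L:ℝ) := by exact_mod_cast heL
            nlinarith [mul_le_mul_of_nonneg_right c1 hrmax.le,
              mul_le_mul_of_nonneg_right ce hrmax.le,
              mul_nonneg hrmax.le hLpos.le]
        · have h1 := hB b hb
          have h2 := hA (b-e) (by omega)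
          have hnat : min b (H - h + 1) ≤ 2*L := by omega
          have hle : ((min b (H - h + 1):ℕ):ℝ) ≤ 2*(L:ℝ) := by exact_mod_cast hnat
          nlinarith [mul_le_mul_of_nonneg_right hle hrmax.le]
      exact ⟨fun b hb => ⟨hA b hb, hB b hb⟩, hMono, hLip⟩
  intro h hh b hbmem e hemem
  rw [Finset.mem_Icc] at hh hbmem hemem
  obtain ⟨-, IHmono, IHlip⟩ := key (H + 1 - h) h (by omega) hh.1
  constructor
  · have := IHmono (b - e) b (Nat.sub_le _ _) hbmem.2; linarith
  · exact IHlip b hbmem.2 e hemem.1 (le_trans hemem.2 (min_le_left _ _))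
      (le_trans hemem.2 (min_le_right _ _))
end

section
/- For the true Bellman value functions: for every h ∈ {1,…,H}, every b ∈ {1,…,LH}, and every integer e with 1 ≤ e ≤ min(b, L), one has 0 ≤ U_h(b) − U_h(b−e) ≤ 2·r_max·L. -/
set_option maxHeartbeats 1600000 in
/-- For the true Bellman value functions, for every `h ∈ {1,…,H}`,
`b ∈ {1,…,LH}` and integer `e` with `1 ≤ e ≤ min b L`, one has
`0 ≤ U_h(b) − U_h(b−e) ≤ 2·r_max·L`. -/
theorem true_dp_monotone_lipschitz
    {Θ 𝒜 : Type*} [Fintype Θ] [Fintype 𝒜] [Nonempty Θ] [Nonempty 𝒜]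
    (θnull : Θ) (anull : 𝒜)
    (H L : ℕ) (hH : 0 < H) (hL : 0 < L)
    (rmax : ℝ) (hrmax : 0 < rmax)
    (r : Θ → 𝒜 → ℝ) (hr_le : ∀ θ a, r θ a ≤ rmax) (hr_null : ∀ θ, r θ anull = 0)
    (d : Θ → 𝒜 → ℕ) (hd_le : ∀ θ a, d θ a ≤ L) (hd_null : ∀ θ, d θ anull = 0)
    (hd_pos : ∀ θ : Θ, ∀ a : 𝒜, a ≠ anull → 1 ≤ d θ a)
    (ρ : Θ → 𝒜 → ℝ) (hρ : ∀ θ a, ρ θ a ∈ Set.Icc (0 : ℝ) 1)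
    (Λ : ℕ → Θ → ℝ) (hΛ0 : ∀ h θ, 0 ≤ Λ h θ)
    (hΛ1 : ∀ h ∈ Finset.Icc 1 H, ∑ θ : Θ, Λ h θ = 1)
    (V : ℕ → ℕ → Θ → ℝ) (U : ℕ → ℕ → ℝ)
    (hVtop : ∀ b ≤ L * H, ∀ θ : Θ, V (H + 1) b θ = 0)
    (hUtop : ∀ b ≤ L * H, U (H + 1) b = 0)
    (hVmax : ∀ h ∈ Finset.Icc 1 H, ∀ b ≤ L * H, ∀ θ : Θ,
      IsGreatest ((fun a => ρ θ a * r θ a + ρ θ a * U (h + 1) (b - d θ a)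
          + (1 - ρ θ a) * U (h + 1) b) '' {a : 𝒜 | 0 ≤ r θ a ∧ d θ a ≤ b})
        (V h b θ))
    (hUdef : ∀ h ∈ Finset.Icc 1 H, ∀ b ≤ L * H,
      U h b = ∑ θ : Θ, Λ h θ * V h b θ) :
    ∀ h ∈ Finset.Icc 1 H, ∀ b ∈ Finset.Icc 1 (L * H), ∀ e ∈ Finset.Icc 1 (min b L),
      0 ≤ U h b - U h (b - e) ∧ U h b - U h (b - e) ≤ 2 * rmax * (L : ℝ) := by
  have key : ∀ k : ℕ, ∀ h : ℕ, h + k = H + 1 → 1 ≤ h →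
      ∀ b' b : ℕ, b' ≤ b → b ≤ L * H →
      0 ≤ U h b - U h b' ∧ U h b - U h b' ≤ rmax * ((b : ℝ) - (b' : ℝ)) := by
    intro k
    induction k with
    | zero =>
      intro h hhk _ b' b hb'b hb
      have hh : h = H + 1 := by omega
      subst hh
      rw [hUtop b hb, hUtop b' (le_trans hb'b hb)]
      have hc : (b' : ℝ) ≤ b := by exact_mod_cast hb'b
      constructor
      · simp
      · nlinarith
    | succ k ih =>
      intro h hhk hh1 b' b hb'b hb
      have hhH : h ∈ Finset.Icc 1 H := by
        simp only [Finset.mem_Icc]; omega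
      have hb' : b' ≤ L * H := le_trans hb'b hb
      have ihU : ∀ x y : ℕ, x ≤ y → y ≤ L * H →
          0 ≤ U (h+1) y - U (h+1) x ∧
            U (h+1) y - U (h+1) x ≤ rmax * ((y:ℝ) - (x:ℝ)) := by
        intro x y hxy hy
        exact ih (h+1) (by omega) (by omega) x y hxy hy
      have hV : ∀ θ : Θ, 0 ≤ V h b θ - V h b' θ ∧
          V h b θ - V h b' θ ≤ rmax * ((b:ℝ) - (b':ℝ)) := by
        intro θ
        obtain ⟨hVb_mem, hVb_ub⟩ := hVmax h hhH b hb θ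
        obtain ⟨hVb'_mem, hVb'_ub⟩ := hVmax h hhH b' hb' θ
        obtain ⟨a', ⟨hr', hd'⟩, hfa'⟩ := hVb'_mem
        obtain ⟨a, ⟨hra, hda⟩, hfa⟩ := hVb_mem
        obtain ⟨hρ0, hρ1⟩ := hρ θ a
        obtain ⟨hρ0', hρ1'⟩ := hρ θ a'
        have hfa2 : ρ θ a * r θ a + ρ θ a * U (h + 1) (b - d θ a)
            + (1 - ρ θ a) * U (h + 1) b = V h b θ := hfa
        have hfa'2 : ρ θ a' * r θ a' + ρ θ a' * U (h + 1) (b' - d θ a')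
            + (1 - ρ θ a') * U (h + 1) b' = V h b' θ := hfa'
        constructor
        · -- monotonicity
          have hub : ρ θ a' * r θ a' + ρ θ a' * U (h + 1) (b - d θ a')
              + (1 - ρ θ a') * U (h + 1) b ≤ V h b θ :=
            hVb_ub ⟨a', ⟨hr', le_trans hd' hb'b⟩, rfl⟩
          have h1 := ihU (b' - d θ a') (b - d θ a')
            (Nat.sub_le_sub_right hb'b _) (le_trans (Nat.sub_le _ _) hb)
          have h2 := ihU b' b hb'b hb
          nlinarith [mul_nonneg hρ0' h1.1,
            mul_nonneg (by linarith : (0:ℝ) ≤ 1 - ρ θ a') h2.1]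
        · -- Lipschitz
          have h2 := ihU b' b hb'b hb
          rcases le_or_gt (d θ a) b' with hcase | hcase
          · have hub : ρ θ a * r θ a + ρ θ a * U (h + 1) (b' - d θ a)
                + (1 - ρ θ a) * U (h + 1) b' ≤ V h b' θ :=
              hVb'_ub ⟨a, ⟨hra, hcase⟩, rfl⟩
            have h1 := ihU (b' - d θ a) (b - d θ a)
              (Nat.sub_le_sub_right hb'b _) (le_trans (Nat.sub_le _ _) hb)
            have e1 : ((b - d θ a : ℕ):ℝ) = (b:ℝ) - (d θ a : ℝ) := by
              rw [Nat.cast_sub hda]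
            have e2 : ((b' - d θ a : ℕ):ℝ) = (b':ℝ) - (d θ a : ℝ) := by
              rw [Nat.cast_sub hcase]
            rw [e1, e2] at h1
            nlinarith [mul_le_mul_of_nonneg_left h1.2 hρ0,
              mul_le_mul_of_nonneg_left h2.2 (by linarith : (0:ℝ) ≤ 1 - ρ θ a)]
          · -- use null action at b'
            have hnull0 : ρ θ anull * r θ anull + ρ θ anull * U (h + 1) (b' - d θ anull)
                + (1 - ρ θ anull) * U (h + 1) b' ≤ V h b' θ :=
              hVb'_ub ⟨anull, ⟨by rw [hr_null], by rw [hd_null]; exact Nat.zero_le _⟩, rfl⟩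
            have hnull : U (h + 1) b' ≤ V h b' θ := by
              rw [hr_null, hd_null, Nat.sub_zero] at hnull0
              linarith [hnull0]
            have hbb' : b' + 1 ≤ b := by
              have := le_trans hcase.le hda
              omega
            have hbb'R : (b':ℝ) + 1 ≤ (b:ℝ) := by exact_mod_cast hbb'
            have hΔ : U (h + 1) (b - d θ a) - U (h + 1) b' ≤ rmax * ((b:ℝ) - (b':ℝ) - 1) := by
              rcases le_or_gt (b - d θ a) b' with hc | hc
              · have hm := (ihU (b - d θ a) b' hc hb').1
                nlinarith
              · have hm := (ihU b' (b - d θ a) hc.le (le_trans (Nat.sub_le _ _) hb)).2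
                have e1 : ((b - d θ a : ℕ):ℝ) = (b:ℝ) - (d θ a : ℝ) := by
                  rw [Nat.cast_sub hda]
                rw [e1] at hm
                have hdR : (b':ℝ) + 1 ≤ (d θ a : ℝ) := by exact_mod_cast hcase
                nlinarith
            have hterm : r θ a + U (h + 1) (b - d θ a) - U (h + 1) b'
                ≤ rmax * ((b:ℝ) - (b':ℝ)) := by
              have := hr_le θ a
              nlinarith
            nlinarith [mul_le_mul_of_nonneg_left hterm hρ0,
              mul_le_mul_of_nonneg_left h2.2 (by linarith : (0:ℝ) ≤ 1 - ρ θ a)]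
      have hUd : U h b - U h b' = ∑ θ : Θ, Λ h θ * (V h b θ - V h b' θ) := by
        rw [hUdef h hhH b hb, hUdef h hhH b' hb', ← Finset.sum_sub_distrib]
        apply Finset.sum_congr rfl
        intro θ _
        ring
      constructor
      · rw [hUd]
        exact Finset.sum_nonneg fun θ _ => mul_nonneg (hΛ0 h θ) (hV θ).1
      · rw [hUd]
        calc ∑ θ : Θ, Λ h θ * (V h b θ - V h b' θ)
            ≤ ∑ θ : Θ, Λ h θ * (rmax * ((b:ℝ) - (b':ℝ))) :=
              Finset.sum_le_sum fun θ _ =>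
                mul_le_mul_of_nonneg_left (hV θ).2 (hΛ0 h θ)
          _ = rmax * ((b:ℝ) - (b':ℝ)) := by
              rw [← Finset.sum_mul, hΛ1 h hhH, one_mul]
  intro h hh b hb e he
  simp only [Finset.mem_Icc] at hh hb he
  have h1 := key (H + 1 - h) h (by omega) hh.1 (b - e) b (Nat.sub_le _ _) hb.2
  refine ⟨h1.1, ?_⟩
  have heb : e ≤ b := le_trans he.2 (min_le_left _ _)
  have he' : ((b - e : ℕ):ℝ) = (b:ℝ) - (e:ℝ) := by rw [Nat.cast_sub heb]
  rw [he'] at h1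
  have heL : (e:ℝ) ≤ (L:ℝ) := by exact_mod_cast le_trans he.2 (min_le_right _ _)
  nlinarith [h1.2, mul_le_mul_of_nonneg_left heL hrmax.le,
    mul_nonneg hrmax.le (Nat.cast_nonneg L)]
end

section
/- For the Optimistic-DP value functions: for every h ∈ {1,…,H}, every b ∈ {0,…,LH}, and every pair of contexts θ, θ' ∈ Θ, one has |V̂_h(b,θ) − V̂_h(b,θ')| ≤ (2L+1)·r_max. This holds with certainty, for every choice of p, q and of the sample contexts (θ_{h,s}). -/
/-- For the Optimistic-DP value functions, for every `h ∈ {1,…,H}`,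
`b ∈ {0,…,LH}` and contexts `θ, θ'`, one has `|V̂_h(b,θ) − V̂_h(b,θ')| ≤ (2L+1)·r_max`,
for every choice of `p, q` and of the sample contexts `θs`. -/
theorem optimistic_dp_context_diff_bound
    {Θ 𝒜 : Type*} [Fintype Θ] [Fintype 𝒜] [Nonempty Θ] [Nonempty 𝒜]
    (θnull : Θ) (anull : 𝒜)
    (H L : ℕ) (hH : 0 < H) (hL : 0 < L)
    (rmax : ℝ) (hrmax : 0 < rmax)
    (r : Θ → 𝒜 → ℝ) (hr_le : ∀ θ a, r θ a ≤ rmax) (hr_null : ∀ θ, r θ anull = 0)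
    (d : Θ → 𝒜 → ℕ) (hd_le : ∀ θ a, d θ a ≤ L) (hd_null : ∀ θ, d θ anull = 0)
    (p q : Θ → 𝒜 → ℝ)
    (hp : ∀ θ a, p θ a ∈ Set.Icc (0 : ℝ) 1) (hq : ∀ θ a, q θ a ∈ Set.Icc (0 : ℝ) 1)
    {S : Type*} [Fintype S] [Nonempty S]
    (θs : ℕ → S → Θ)
    (Vhat : ℕ → ℕ → Θ → ℝ) (Uhat : ℕ → ℕ → ℝ)
    (hUtop : ∀ b ≤ L * H, Uhat (H + 1) b = 0)
    (hVmax : ∀ h ∈ Finset.Icc 1 H, ∀ b ≤ L * H, ∀ θ : Θ,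
      IsGreatest ((fun a => q θ a * r θ a + p θ a * Uhat (h + 1) (b - d θ a)
          + (1 - p θ a) * Uhat (h + 1) b) '' {a : 𝒜 | 0 ≤ r θ a ∧ d θ a ≤ b})
        (Vhat h b θ))
    (hUdef : ∀ h ∈ Finset.Icc 1 H, ∀ b ≤ L * H,
      Uhat h b = min ((∑ s : S, Vhat h b (θs h s)) / (Fintype.card S : ℝ))
        (((min b (H - h + 1) : ℕ) : ℝ) * rmax)) :
    ∀ h ∈ Finset.Icc 1 H, ∀ b ≤ L * H, ∀ θ θ' : Θ,
      |Vhat h b θ - Vhat h b θ'| ≤ (2 * (L : ℝ) + 1) * rmax := by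
  -- sandwich: given monotonicity and nonnegativity of `Uhat (h+1)`,
  -- `Uhat (h+1) b ≤ Vhat h b θ ≤ rmax + Uhat (h+1) b`.
  have sandwich : ∀ h, 1 ≤ h → h ≤ H →
      (∀ b b', b ≤ b' → b' ≤ L * H → Uhat (h + 1) b ≤ Uhat (h + 1) b') →
      ∀ b, b ≤ L * H → ∀ θ : Θ,
        Uhat (h + 1) b ≤ Vhat h b θ ∧ Vhat h b θ ≤ rmax + Uhat (h + 1) b := by
    intro h h1 hhH mono b hb θ
    have hg := hVmax h (Finset.mem_Icc.mpr ⟨h1, hhH⟩) b hb θ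
    constructor
    · have hmem : Uhat (h + 1) b ∈
          ((fun a => q θ a * r θ a + p θ a * Uhat (h + 1) (b - d θ a)
            + (1 - p θ a) * Uhat (h + 1) b) '' {a : 𝒜 | 0 ≤ r θ a ∧ d θ a ≤ b}) := by
        refine ⟨anull, ⟨by rw [hr_null], by rw [hd_null]; exact Nat.zero_le _⟩, ?_⟩
        simp only [hr_null, hd_null, Nat.sub_zero, mul_zero]
        ring
      exact hg.2 hmem
    · obtain ⟨a, ⟨hra, hda⟩, hval⟩ := hg.1
      rw [← hval]
      have hpa := hp θ a
      have hqa := hq θ a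
      have h1' : q θ a * r θ a ≤ rmax := by
        nlinarith [mul_nonneg (by linarith [hqa.2] : (0:ℝ) ≤ 1 - q θ a) hra, hr_le θ a]
      have h2' : Uhat (h + 1) (b - d θ a) ≤ Uhat (h + 1) b :=
        mono _ _ (Nat.sub_le _ _) hb
      have h3' : p θ a * Uhat (h + 1) (b - d θ a) ≤ p θ a * Uhat (h + 1) b :=
        mul_le_mul_of_nonneg_left h2' hpa.1
      show q θ a * r θ a + p θ a * Uhat (h + 1) (b - d θ a)
          + (1 - p θ a) * Uhat (h + 1) b ≤ rmax + Uhat (h + 1) b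
      nlinarith [h1', h3']
  -- main induction (downward in h, i.e. on j = H + 1 - h)
  have key : ∀ j h, 1 ≤ h → h + j = H + 1 →
      ((∀ b b', b ≤ b' → b' ≤ L * H → Uhat h b ≤ Uhat h b') ∧
       (∀ b, b ≤ L * H → 0 ≤ Uhat h b)) := by
    intro j
    induction j with
    | zero =>
      intro h h1 hsum
      have : h = H + 1 := by omega
      subst this
      constructor
      · intro b b' hbb hb'
        rw [hUtop b (le_trans hbb hb'), hUtop b' hb']
      · intro b hb; rw [hUtop b hb]
    | succ j ih =>
      intro h h1 hsum
      have hhH : h ≤ H := by omega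
      obtain ⟨mono, nn⟩ := ih (h + 1) (by omega) (by omega)
      have hmemIcc : h ∈ Finset.Icc 1 H := Finset.mem_Icc.mpr ⟨h1, hhH⟩
      -- monotonicity of Vhat h in b
      have Vmono : ∀ (θ : Θ) b b', b ≤ b' → b' ≤ L * H →
          Vhat h b θ ≤ Vhat h b' θ := by
        intro θ b b' hbb hb'
        have hb : b ≤ L * H := le_trans hbb hb'
        obtain ⟨a, ⟨hra, hda⟩, hval⟩ := (hVmax h hmemIcc b hb θ).1
        have hmem' : (q θ a * r θ a + p θ a * Uhat (h + 1) (b' - d θ a)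
            + (1 - p θ a) * Uhat (h + 1) b') ∈
            ((fun a => q θ a * r θ a + p θ a * Uhat (h + 1) (b' - d θ a)
              + (1 - p θ a) * Uhat (h + 1) b') '' {a : 𝒜 | 0 ≤ r θ a ∧ d θ a ≤ b'}) :=
          ⟨a, ⟨hra, le_trans hda hbb⟩, rfl⟩
        have hle := (hVmax h hmemIcc b' hb' θ).2 hmem'
        have hpa := hp θ a
        have hm1 : Uhat (h + 1) (b - d θ a) ≤ Uhat (h + 1) (b' - d θ a) :=
          mono _ _ (Nat.sub_le_sub_right hbb _) (le_trans (Nat.sub_le _ _) hb')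
        have hm2 : Uhat (h + 1) b ≤ Uhat (h + 1) b' := mono _ _ hbb hb'
        have : q θ a * r θ a + p θ a * Uhat (h + 1) (b - d θ a)
            + (1 - p θ a) * Uhat (h + 1) b
            ≤ q θ a * r θ a + p θ a * Uhat (h + 1) (b' - d θ a)
            + (1 - p θ a) * Uhat (h + 1) b' := by
          nlinarith [mul_le_mul_of_nonneg_left hm1 hpa.1,
            mul_le_mul_of_nonneg_left hm2 (by linarith [hpa.2] : (0:ℝ) ≤ 1 - p θ a)]
        rw [← hval]
        exact le_trans this hle
      constructor
      · intro b b' hbb hb'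
        have hb : b ≤ L * H := le_trans hbb hb'
        rw [hUdef h hmemIcc b hb, hUdef h hmemIcc b' hb']
        refine min_le_min ?_ ?_
        · have hc : (0:ℝ) ≤ (Fintype.card S : ℝ) := by positivity
          apply div_le_div_of_nonneg_right ?_ hc |>.trans_eq rfl
          exact Finset.sum_le_sum fun s _ => Vmono _ b b' hbb hb'
        · refine mul_le_mul_of_nonneg_right ?_ hrmax.le
          exact Nat.cast_le.mpr (by omega : min b (H - h + 1) ≤ min b' (H - h + 1))
      · intro b hb
        rw [hUdef h hmemIcc b hb]
        refine le_min ?_ ?_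
        · apply div_nonneg _ (by positivity)
          refine Finset.sum_nonneg fun s _ => ?_
          exact le_trans (nn b hb)
            ((sandwich h h1 hhH mono b hb (θs h s)).1)
        · positivity
  -- conclusion
  intro h hmem b hb θ θ'
  obtain ⟨h1, hhH⟩ := Finset.mem_Icc.mp hmem
  obtain ⟨mono, nn⟩ := key (H - h) (h + 1) (by omega) (by omega)
  have s1 := sandwich h h1 hhH mono b hb θ
  have s2 := sandwich h h1 hhH mono b hb θ'
  have habs : |Vhat h b θ - Vhat h b θ'| ≤ rmax := by
    rw [abs_le]
    constructor <;> linarith [s1.1, s1.2, s2.1, s2.2]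
  have : rmax ≤ (2 * (L : ℝ) + 1) * rmax := by
    have : (0 : ℝ) ≤ (L : ℝ) := Nat.cast_nonneg _
    nlinarith
  linarith
end

section
/- For the true Bellman value functions: for every h ∈ {1,…,H}, every b ∈ {0,…,LH}, and every pair of contexts θ, θ' ∈ Θ, one has |V_h(b,θ) − V_h(b,θ')| ≤ (2L+1)·r_max. -/
/-- For the true Bellman value functions, for every `h ∈ {1,…,H}`,
`b ∈ {0,…,LH}` and contexts `θ, θ'`, one has `|V_h(b,θ) − V_h(b,θ')| ≤ (2L+1)·r_max`. -/
theorem true_dp_context_diff_bound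
    {Θ 𝒜 : Type*} [Fintype Θ] [Fintype 𝒜] [Nonempty Θ] [Nonempty 𝒜]
    (θnull : Θ) (anull : 𝒜)
    (H L : ℕ) (hH : 0 < H) (hL : 0 < L)
    (rmax : ℝ) (hrmax : 0 < rmax)
    (r : Θ → 𝒜 → ℝ) (hr_le : ∀ θ a, r θ a ≤ rmax) (hr_null : ∀ θ, r θ anull = 0)
    (d : Θ → 𝒜 → ℕ) (hd_le : ∀ θ a, d θ a ≤ L) (hd_null : ∀ θ, d θ anull = 0)
    (hd_pos : ∀ θ : Θ, ∀ a : 𝒜, a ≠ anull → 1 ≤ d θ a)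
    (ρ : Θ → 𝒜 → ℝ) (hρ : ∀ θ a, ρ θ a ∈ Set.Icc (0 : ℝ) 1)
    (Λ : ℕ → Θ → ℝ) (hΛ0 : ∀ h θ, 0 ≤ Λ h θ)
    (hΛ1 : ∀ h ∈ Finset.Icc 1 H, ∑ θ : Θ, Λ h θ = 1)
    (V : ℕ → ℕ → Θ → ℝ) (U : ℕ → ℕ → ℝ)
    (hVtop : ∀ b ≤ L * H, ∀ θ : Θ, V (H + 1) b θ = 0)
    (hUtop : ∀ b ≤ L * H, U (H + 1) b = 0)
    (hVmax : ∀ h ∈ Finset.Icc 1 H, ∀ b ≤ L * H, ∀ θ : Θ,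
      IsGreatest ((fun a => ρ θ a * r θ a + ρ θ a * U (h + 1) (b - d θ a)
          + (1 - ρ θ a) * U (h + 1) b) '' {a : 𝒜 | 0 ≤ r θ a ∧ d θ a ≤ b})
        (V h b θ))
    (hUdef : ∀ h ∈ Finset.Icc 1 H, ∀ b ≤ L * H,
      U h b = ∑ θ : Θ, Λ h θ * V h b θ) :
    ∀ h ∈ Finset.Icc 1 H, ∀ b ≤ L * H, ∀ θ θ' : Θ,
      |V h b θ - V h b θ'| ≤ (2 * (L : ℝ) + 1) * rmax := by

  -- Monotonicity of U in the budget
  have hUmono : ∀ j : ℕ, ∀ h : ℕ, H + 1 - h ≤ j → 1 ≤ h → h ≤ H + 1 →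
      ∀ b b' : ℕ, b ≤ b' → b' ≤ L * H → U h b ≤ U h b' := by
    intro j
    induction j with
    | zero =>
      intro h hle h1 h2 b b' hbb hb'
      have : h = H + 1 := by omega
      subst this
      rw [hUtop b (le_trans hbb hb'), hUtop b' hb']
    | succ j ih =>
      intro h hle h1 h2 b b' hbb hb'
      by_cases hcase : h = H + 1
      · subst hcase
        rw [hUtop b (le_trans hbb hb'), hUtop b' hb']
      · have hmem : h ∈ Finset.Icc 1 H := Finset.mem_Icc.mpr ⟨h1, by omega⟩
        rw [hUdef h hmem b (le_trans hbb hb'), hUdef h hmem b' hb']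
        apply Finset.sum_le_sum
        intro θ _
        refine mul_le_mul_of_nonneg_left ?_ (hΛ0 h θ)
        obtain ⟨a, ⟨hra, hda⟩, hVa⟩ := (hVmax h hmem b (le_trans hbb hb') θ).1
        have hub := (hVmax h hmem b' hb' θ).2
          (Set.mem_image_of_mem _ (⟨hra, le_trans hda hbb⟩ :
            a ∈ {a : 𝒜 | 0 ≤ r θ a ∧ d θ a ≤ b'}))
        have hU1 : U (h+1) (b - d θ a) ≤ U (h+1) (b' - d θ a) :=
          ih (h+1) (by omega) (by omega) (by omega) _ _
            (Nat.sub_le_sub_right hbb _) (le_trans (Nat.sub_le _ _) hb')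
        have hU2 : U (h+1) b ≤ U (h+1) b' :=
          ih (h+1) (by omega) (by omega) (by omega) _ _ hbb hb'
        have hρ1 := (hρ θ a).1
        have hρ2 := (hρ θ a).2
        rw [← hVa]
        simp only at hub ⊢
        nlinarith [hub]
  intro h hmem b hb θ θ'
  have hh := Finset.mem_Icc.mp hmem
  -- lower bound: V h b t ≥ U (h+1) b (take the null action)
  have hlow : ∀ t : Θ, U (h+1) b ≤ V h b t := by
    intro t
    have hnull : anull ∈ {a : 𝒜 | 0 ≤ r t a ∧ d t a ≤ b} :=
      ⟨le_of_eq (hr_null t).symm, by rw [hd_null]; exact Nat.zero_le b⟩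
    have := (hVmax h hmem b hb t).2 (Set.mem_image_of_mem _ hnull)
    simp only [hr_null, hd_null, Nat.sub_zero] at this
    linarith [this]
  -- upper bound: V h b t ≤ rmax + U (h+1) b
  have hup : ∀ t : Θ, V h b t ≤ rmax + U (h+1) b := by
    intro t
    obtain ⟨a, ⟨hra, hda⟩, hVa⟩ := (hVmax h hmem b hb t).1
    have hρ1 := (hρ t a).1
    have hρ2 := (hρ t a).2
    have hU : U (h+1) (b - d t a) ≤ U (h+1) b :=
      hUmono (H + 1) (h+1) (by omega) (by omega) (by omega) _ _ (Nat.sub_le _ _) hb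
    have hrle := hr_le t a
    rw [← hVa]
    simp only
    nlinarith
  have hLc : (0:ℝ) ≤ (L:ℝ) := Nat.cast_nonneg L
  rw [abs_le]
  constructor <;> nlinarith [hlow θ, hlow θ', hup θ, hup θ']
end

section
/- One-step preservation of monotonicity and Lipschitz bounds under the optimistic Bellman backup: let C ≥ 0 and let g : {0,…,LH} → ℝ satisfy 0 ≤ g(b) − g(b−e) ≤ C for every b ∈ {1,…,LH} and every integer e with 1 ≤ e ≤ min(b, L). Given p, q : Θ × 𝒜 → [0,1], define F(b,θ) = max_{a ∈ 𝒜(b,θ)} [ q(θ,a)·r(θ,a) + p(θ,a)·g(b − d(θ,a)) + (1 − p(θ,a))·g(b) ]. Then: (i) F(b−e,θ) ≤ F(b,θ) for every b ∈ {1,…,LH}, every integer e with 1 ≤ e ≤ b, and every θ ∈ Θ; and (ii) for every b ∈ {1,…,LH}, every integer e with 1 ≤ e ≤ L and b − e ≥ L, and every θ ∈ Θ, one has F(b,θ) − F(b−e,θ) ≤ C. -/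
/-- One-step preservation of monotonicity and Lipschitz bounds under the
optimistic Bellman backup. If `g` satisfies `0 ≤ g(b) − g(b−e) ≤ C` for `b ∈ {1,…,LH}`
and `1 ≤ e ≤ min b L`, and `F(b,θ)` is the optimistic backup of `g`, then (i) `F` is
nondecreasing in the budget, and (ii) `F(b,θ) − F(b−e,θ) ≤ C` whenever `1 ≤ e ≤ L` and
`b − e ≥ L`. -/
theorem one_step_backup_monotone_lipschitz
    {Θ 𝒜 : Type*} [Fintype Θ] [Fintype 𝒜] [Nonempty Θ] [Nonempty 𝒜]
    (θnull : Θ) (anull : 𝒜)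
    (H L : ℕ) (hH : 0 < H) (hL : 0 < L)
    (rmax : ℝ) (hrmax : 0 < rmax)
    (r : Θ → 𝒜 → ℝ) (hr_le : ∀ θ a, r θ a ≤ rmax) (hr_null : ∀ θ, r θ anull = 0)
    (d : Θ → 𝒜 → ℕ) (hd_le : ∀ θ a, d θ a ≤ L) (hd_null : ∀ θ, d θ anull = 0)
    (p q : Θ → 𝒜 → ℝ)
    (hp : ∀ θ a, p θ a ∈ Set.Icc (0 : ℝ) 1) (hq : ∀ θ a, q θ a ∈ Set.Icc (0 : ℝ) 1)
    (C : ℝ) (hC : 0 ≤ C)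
    (g : ℕ → ℝ)
    (hg : ∀ b ∈ Finset.Icc 1 (L * H), ∀ e ∈ Finset.Icc 1 (min b L),
      0 ≤ g b - g (b - e) ∧ g b - g (b - e) ≤ C)
    (F : ℕ → Θ → ℝ)
    (hF : ∀ b ≤ L * H, ∀ θ : Θ,
      IsGreatest ((fun a => q θ a * r θ a + p θ a * g (b - d θ a)
          + (1 - p θ a) * g b) '' {a : 𝒜 | 0 ≤ r θ a ∧ d θ a ≤ b})
        (F b θ)) :
    (∀ b ∈ Finset.Icc 1 (L * H), ∀ e ∈ Finset.Icc 1 b, ∀ θ : Θ,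
        F (b - e) θ ≤ F b θ) ∧
    (∀ b ∈ Finset.Icc 1 (L * H), ∀ e : ℕ, 1 ≤ e → e ≤ L → L ≤ b - e → ∀ θ : Θ,
        F b θ - F (b - e) θ ≤ C) := by

  have gmono : ∀ x y : ℕ, x ≤ y → y ≤ L * H → g x ≤ g y := by
    have key : ∀ (k : ℕ) (y : ℕ), y ≤ L * H → g (y - k) ≤ g y := by
      intro k
      induction k with
      | zero => intro y hy; simp
      | succ k ih =>
        intro y hy
        refine le_trans ?_ (ih y hy)
        rcases Nat.eq_zero_or_pos (y - k) with h0 | h1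
        · have h : y - (k + 1) = y - k := by omega
          rw [h]
        · have hb := hg (y - k) (Finset.mem_Icc.mpr ⟨h1, by omega⟩) 1
            (Finset.mem_Icc.mpr ⟨le_refl 1, by omega⟩)
          have h : y - (k + 1) = y - k - 1 := by omega
          rw [h]; linarith [hb.1]
    intro x y hxy hy
    have := key (y - x) y hy
    rwa [Nat.sub_sub_self hxy] at this
  constructor
  · intro b hb e he θ
    rw [Finset.mem_Icc] at hb he
    obtain ⟨a, ⟨hra, hda⟩, hva⟩ := (hF (b - e) (by omega) θ).1
    have hub := (hF b (by omega) θ).2 ⟨a, ⟨hra, by omega⟩, rfl⟩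
    have hp0 := (hp θ a).1
    have hp1 := (hp θ a).2
    have hg1 : g (b - e - d θ a) ≤ g (b - d θ a) := gmono _ _ (by omega) (by omega)
    have hg2 : g (b - e) ≤ g b := gmono _ _ (by omega) (by omega)
    have h1 : p θ a * g (b - e - d θ a) ≤ p θ a * g (b - d θ a) :=
      mul_le_mul_of_nonneg_left hg1 hp0
    have h2 : (1 - p θ a) * g (b - e) ≤ (1 - p θ a) * g b :=
      mul_le_mul_of_nonneg_left hg2 (by linarith)
    have hva' : q θ a * r θ a + p θ a * g (b - e - d θ a)
        + (1 - p θ a) * g (b - e) = F (b - e) θ := hva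
    have hub' : q θ a * r θ a + p θ a * g (b - d θ a)
        + (1 - p θ a) * g b ≤ F b θ := hub
    linarith
  · intro b hb e he1 heL hbe θ
    rw [Finset.mem_Icc] at hb
    obtain ⟨a, ⟨hra, hda⟩, hva⟩ := (hF b (by omega) θ).1
    have hdL := hd_le θ a
    have hlb := (hF (b - e) (by omega) θ).2 ⟨a, ⟨hra, by omega⟩, rfl⟩
    have hp0 := (hp θ a).1
    have hp1 := (hp θ a).2
    have hΔ2 := hg b (Finset.mem_Icc.mpr ⟨by omega, hb.2⟩)
      e (Finset.mem_Icc.mpr ⟨he1, by omega⟩)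
    have hΔ1 := hg (b - d θ a) (Finset.mem_Icc.mpr ⟨by omega, by omega⟩)
      e (Finset.mem_Icc.mpr ⟨he1, by omega⟩)
    have hlb' : q θ a * r θ a + p θ a * g (b - e - d θ a)
        + (1 - p θ a) * g (b - e) ≤ F (b - e) θ := hlb
    have heq : b - e - d θ a = b - d θ a - e := by omega
    rw [heq] at hlb' 
    have h1 : p θ a * (g (b - d θ a) - g (b - d θ a - e)) ≤ p θ a * C :=
      mul_le_mul_of_nonneg_left hΔ1.2 hp0
    have h2 : (1 - p θ a) * (g b - g (b - e)) ≤ (1 - p θ a) * C :=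
      mul_le_mul_of_nonneg_left hΔ2.2 (by linarith)
    have hvb : F b θ = q θ a * r θ a + p θ a * g (b - d θ a) + (1 - p θ a) * g b :=
      hva.symm
    nlinarith [hlb', hvb]
end

section
/- One-step optimism of the confidence-bound Bellman backup: let ρ, p, q : Θ × 𝒜 → [0,1] satisfy p(θ,a) ≤ ρ(θ,a) ≤ q(θ,a) for all (θ,a). Let ε ≥ 0 and let g, u : {0,…,LH} → ℝ be such that g is nondecreasing and g(b) ≥ u(b) − ε for every b ∈ {0,…,LH}. Define F(b,θ) = max_{a ∈ 𝒜(b,θ)} [ q(θ,a)·r(θ,a) + p(θ,a)·g(b − d(θ,a)) + (1 − p(θ,a))·g(b) ] and G(b,θ) = max_{a ∈ 𝒜(b,θ)} [ ρ(θ,a)·r(θ,a) + ρ(θ,a)·u(b − d(θ,a)) + (1 − ρ(θ,a))·u(b) ]. Then F(b,θ) ≥ G(b,θ) − ε for every b ∈ {0,…,LH} and every θ ∈ Θ. -/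
/-- One-step optimism of the confidence-bound Bellman backup. If
`p ≤ ρ ≤ q` pointwise, `g` is nondecreasing on `{0,…,LH}` and `g ≥ u − ε` there,
then the optimistic backup `F` of `g` (using `p, q`) dominates the true backup `G`
of `u` (using `ρ`) up to `ε`: `F(b,θ) ≥ G(b,θ) − ε`. -/
theorem one_step_backup_optimism
    {Θ 𝒜 : Type*} [Fintype Θ] [Fintype 𝒜] [Nonempty Θ] [Nonempty 𝒜]
    (θnull : Θ) (anull : 𝒜)
    (H L : ℕ) (hH : 0 < H) (hL : 0 < L)
    (rmax : ℝ) (hrmax : 0 < rmax)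
    (r : Θ → 𝒜 → ℝ) (hr_le : ∀ θ a, r θ a ≤ rmax) (hr_null : ∀ θ, r θ anull = 0)
    (d : Θ → 𝒜 → ℕ) (hd_le : ∀ θ a, d θ a ≤ L) (hd_null : ∀ θ, d θ anull = 0)
    (ρ p q : Θ → 𝒜 → ℝ)
    (hρ : ∀ θ a, ρ θ a ∈ Set.Icc (0 : ℝ) 1)
    (hp : ∀ θ a, p θ a ∈ Set.Icc (0 : ℝ) 1) (hq : ∀ θ a, q θ a ∈ Set.Icc (0 : ℝ) 1)
    (hpρ : ∀ θ a, p θ a ≤ ρ θ a) (hρq : ∀ θ a, ρ θ a ≤ q θ a)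
    (ε : ℝ) (hε : 0 ≤ ε)
    (g u : ℕ → ℝ)
    (hg_mono : ∀ b b' : ℕ, b ≤ b' → b' ≤ L * H → g b ≤ g b')
    (hgu : ∀ b ≤ L * H, u b - ε ≤ g b)
    (F G : ℕ → Θ → ℝ)
    (hF : ∀ b ≤ L * H, ∀ θ : Θ,
      IsGreatest ((fun a => q θ a * r θ a + p θ a * g (b - d θ a)
          + (1 - p θ a) * g b) '' {a : 𝒜 | 0 ≤ r θ a ∧ d θ a ≤ b})
        (F b θ))
    (hG : ∀ b ≤ L * H, ∀ θ : Θ,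
      IsGreatest ((fun a => ρ θ a * r θ a + ρ θ a * u (b - d θ a)
          + (1 - ρ θ a) * u b) '' {a : 𝒜 | 0 ≤ r θ a ∧ d θ a ≤ b})
        (G b θ)) :
    ∀ b ≤ L * H, ∀ θ : Θ, G b θ - ε ≤ F b θ := by
  intro b hb θ
  obtain ⟨⟨x, hx, hGx⟩, -⟩ := hG b hb θ
  obtain ⟨-, hFub⟩ := hF b hb θ
  have hFx : q θ x * r θ x + p θ x * g (b - d θ x) + (1 - p θ x) * g b ≤ F b θ :=
    hFub ⟨x, hx, rfl⟩
  have hd' : b - d θ x ≤ L * H := le_trans (Nat.sub_le _ _) hb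
  have hgm : g (b - d θ x) ≤ g b := hg_mono _ _ (Nat.sub_le _ _) hb
  have h1 : u (b - d θ x) - ε ≤ g (b - d θ x) := hgu _ hd'
  have h2 : u b - ε ≤ g b := hgu _ hb
  have hρx := hρ θ x
  have hpx := hp θ x
  have hqx := hq θ x
  simp only [Set.mem_Icc] at hρx hpx hqx
  have hrx : 0 ≤ r θ x := hx.1
  have hqr : ρ θ x * r θ x ≤ q θ x * r θ x := mul_le_mul_of_nonneg_right (hρq θ x) hrx
  rw [← hGx]
  simp only
  nlinarith [mul_le_mul_of_nonneg_right (hpρ θ x) (sub_nonneg.2 hgm),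
    mul_le_mul_of_nonneg_left h1 hρx.1, mul_le_mul_of_nonneg_left h2 (sub_nonneg.2 hρx.2)]
end

section
/- Deterministic optimism of Optimistic-DP under uniform empirical accuracy: suppose p(θ,a) ≤ ρ(θ,a) ≤ q(θ,a) for all (θ,a) ∈ Θ × 𝒜, and suppose there exists ε ≥ 0 such that for every h ∈ {1,…,H} and every b ∈ {0,…,LH} the sample contexts satisfy (1/|S|)·Σ_{s∈S} V_h(b, θ_{h,s}) ≥ U_h(b) − ε. Then for every h ∈ {1,…,H} and every b ∈ {0,…,LH}: U_h(b) ≤ Û_h(b) + (H−h+1)·ε; in particular, U_1(b) ≤ Û_1(b) + H·ε for every b ∈ {0,…,LH}. -/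
/-- Deterministic optimism of Optimistic-DP under uniform empirical accuracy.
If `p ≤ ρ ≤ q` pointwise and the sample contexts satisfy, for every `h ∈ {1,…,H}` and
`b ∈ {0,…,LH}`, `(1/|S|)·Σ_s V_h(b, θ_{h,s}) ≥ U_h(b) − ε` for some `ε ≥ 0`, then
`U_h(b) ≤ Û_h(b) + (H−h+1)·ε` for every such `h, b`; in particular
`U_1(b) ≤ Û_1(b) + H·ε`. -/
theorem optimistic_dp_deterministic_optimism
    {Θ 𝒜 : Type*} [Fintype Θ] [Fintype 𝒜] [Nonempty Θ] [Nonempty 𝒜]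
    (θnull : Θ) (anull : 𝒜)
    (H L : ℕ) (hH : 0 < H) (hL : 0 < L)
    (rmax : ℝ) (hrmax : 0 < rmax)
    (r : Θ → 𝒜 → ℝ) (hr_le : ∀ θ a, r θ a ≤ rmax) (hr_null : ∀ θ, r θ anull = 0)
    (d : Θ → 𝒜 → ℕ) (hd_le : ∀ θ a, d θ a ≤ L) (hd_null : ∀ θ, d θ anull = 0)
    (hd_pos : ∀ θ : Θ, ∀ a : 𝒜, a ≠ anull → 1 ≤ d θ a)
    (ρ : Θ → 𝒜 → ℝ) (hρ : ∀ θ a, ρ θ a ∈ Set.Icc (0 : ℝ) 1)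
    (Λ : ℕ → Θ → ℝ) (hΛ0 : ∀ h θ, 0 ≤ Λ h θ)
    (hΛ1 : ∀ h ∈ Finset.Icc 1 H, ∑ θ : Θ, Λ h θ = 1)
    (V : ℕ → ℕ → Θ → ℝ) (U : ℕ → ℕ → ℝ)
    (hVtop : ∀ b ≤ L * H, ∀ θ : Θ, V (H + 1) b θ = 0)
    (hUtopT : ∀ b ≤ L * H, U (H + 1) b = 0)
    (hVmaxT : ∀ h ∈ Finset.Icc 1 H, ∀ b ≤ L * H, ∀ θ : Θ,
      IsGreatest ((fun a => ρ θ a * r θ a + ρ θ a * U (h + 1) (b - d θ a)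
          + (1 - ρ θ a) * U (h + 1) b) '' {a : 𝒜 | 0 ≤ r θ a ∧ d θ a ≤ b})
        (V h b θ))
    (hUdefT : ∀ h ∈ Finset.Icc 1 H, ∀ b ≤ L * H,
      U h b = ∑ θ : Θ, Λ h θ * V h b θ)
    (p q : Θ → 𝒜 → ℝ)
    (hp : ∀ θ a, p θ a ∈ Set.Icc (0 : ℝ) 1) (hq : ∀ θ a, q θ a ∈ Set.Icc (0 : ℝ) 1)
    (hpρ : ∀ θ a, p θ a ≤ ρ θ a) (hρq : ∀ θ a, ρ θ a ≤ q θ a)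
    {S : Type*} [Fintype S] [Nonempty S]
    (θs : ℕ → S → Θ)
    (Vhat : ℕ → ℕ → Θ → ℝ) (Uhat : ℕ → ℕ → ℝ)
    (hUtop : ∀ b ≤ L * H, Uhat (H + 1) b = 0)
    (hVmax : ∀ h ∈ Finset.Icc 1 H, ∀ b ≤ L * H, ∀ θ : Θ,
      IsGreatest ((fun a => q θ a * r θ a + p θ a * Uhat (h + 1) (b - d θ a)
          + (1 - p θ a) * Uhat (h + 1) b) '' {a : 𝒜 | 0 ≤ r θ a ∧ d θ a ≤ b})
        (Vhat h b θ))
    (hUdef : ∀ h ∈ Finset.Icc 1 H, ∀ b ≤ L * H,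
      Uhat h b = min ((∑ s : S, Vhat h b (θs h s)) / (Fintype.card S : ℝ))
        (((min b (H - h + 1) : ℕ) : ℝ) * rmax))
    (ε : ℝ) (hε : 0 ≤ ε)
    (hemp : ∀ h ∈ Finset.Icc 1 H, ∀ b ≤ L * H,
      U h b - ε ≤ (∑ s : S, V h b (θs h s)) / (Fintype.card S : ℝ)) :
    (∀ h ∈ Finset.Icc 1 H, ∀ b ≤ L * H,
        U h b ≤ Uhat h b + ((H - h + 1 : ℕ) : ℝ) * ε) ∧
    (∀ b ≤ L * H, U 1 b ≤ Uhat 1 b + (H : ℝ) * ε) := by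
  have cardS : (0:ℝ) < (Fintype.card S : ℝ) := by
    exact_mod_cast Fintype.card_pos
  have main : ∀ n : ℕ, n ≤ H →
      ((∀ b b', b ≤ b' → b' ≤ L*H → Uhat (H+1-n) b ≤ Uhat (H+1-n) b') ∧
       (∀ b ≤ L*H, U (H+1-n) b ≤ ((min b n : ℕ):ℝ) * rmax) ∧
       (∀ b ≤ L*H, U (H+1-n) b ≤ Uhat (H+1-n) b + (n:ℝ) * ε)) := by
    intro n
    induction n with
    | zero =>
      intro _
      simp only [Nat.sub_zero, Nat.min_zero, Nat.cast_zero, Nat.cast_ofNat]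
      refine ⟨?_, ?_, ?_⟩
      · intro b b' hbb hb'
        rw [hUtop b (le_trans hbb hb'), hUtop b' hb']
      · intro b hb
        rw [hUtopT b hb]
        simp
      · intro b hb
        rw [hUtopT b hb, hUtop b hb]
        simp
    | succ n ih =>
      intro hn1
      have hnH : n ≤ H := by omega
      obtain ⟨ihM, ihC, ihO⟩ := ih hnH
      have hsucc : H + 1 - n = (H + 1 - (n+1)) + 1 := by omega
      set h := H + 1 - (n+1) with hdef
      have hh1 : 1 ≤ h := by omega
      have hhH : h ≤ H := by omega
      rw [hsucc] at ihM ihC ihO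
      have hmem : h ∈ Finset.Icc 1 H := Finset.mem_Icc.mpr ⟨hh1, hhH⟩
      -- cap on the true value function V at level h
      have Vcap : ∀ b ≤ L*H, ∀ θ, V h b θ ≤ ((min b (n+1) : ℕ):ℝ) * rmax := by
        intro b hb θ
        obtain ⟨⟨a, ⟨har, had⟩, hav⟩, -⟩ := hVmaxT h hmem b hb θ
        have hρa := hρ θ a
        have hρ0 : (0:ℝ) ≤ ρ θ a := hρa.1
        have hρ1 : ρ θ a ≤ 1 := hρa.2
        have hU1 : U (h+1) (b - d θ a) ≤ ((min (b - d θ a) n : ℕ):ℝ) * rmax :=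
          ihC _ (le_trans (Nat.sub_le _ _) hb)
        have hU2 : U (h+1) b ≤ ((min b n : ℕ):ℝ) * rmax := ihC b hb
        have hmin2 : ((min b n : ℕ):ℝ) ≤ ((min b (n+1) : ℕ):ℝ) := by
          exact_mod_cast (by omega : min b n ≤ min b (n+1))
        have hav' : ρ θ a * r θ a + ρ θ a * U (h+1) (b - d θ a)
            + (1 - ρ θ a) * U (h+1) b = V h b θ := hav
        by_cases hda : d θ a = 0
        · have hra : r θ a = 0 := by
            by_cases hne : a = anull
            · rw [hne]; exact hr_null θ
            · exact absurd (hd_pos θ a hne) (by omega)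
          rw [← hav', hra, hda]
          simp only [Nat.sub_zero]
          nlinarith [mul_le_mul_of_nonneg_right hmin2 (le_of_lt hrmax)]
        · have hd1 : 1 ≤ d θ a := by omega
          have hb1 : 1 ≤ b := le_trans hd1 had
          have c1 : ((min (b - d θ a) n : ℕ):ℝ) + 1 ≤ ((min b (n+1) : ℕ):ℝ) := by
            have : min (b - d θ a) n + 1 ≤ min b (n+1) := by omega
            exact_mod_cast this
          rw [← hav']
          nlinarith [mul_le_mul_of_nonneg_left (hr_le θ a) hρ0,
            mul_le_mul_of_nonneg_left hU1 hρ0,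
            mul_le_mul_of_nonneg_left hU2 (by linarith : (0:ℝ) ≤ 1 - ρ θ a),
            mul_le_mul_of_nonneg_left
              (mul_le_mul_of_nonneg_right c1 (le_of_lt hrmax)) hρ0,
            mul_le_mul_of_nonneg_left
              (mul_le_mul_of_nonneg_right hmin2 (le_of_lt hrmax))
              (by linarith : (0:ℝ) ≤ 1 - ρ θ a)]
      -- cap on U at level h
      have Ucap : ∀ b ≤ L*H, U h b ≤ ((min b (n+1) : ℕ):ℝ) * rmax := by
        intro b hb
        rw [hUdefT h hmem b hb]
        calc ∑ θ : Θ, Λ h θ * V h b θ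
            ≤ ∑ θ : Θ, Λ h θ * (((min b (n+1) : ℕ):ℝ) * rmax) :=
              Finset.sum_le_sum
                (fun θ _ => mul_le_mul_of_nonneg_left (Vcap b hb θ) (hΛ0 h θ))
          _ = ((min b (n+1) : ℕ):ℝ) * rmax := by
              rw [← Finset.sum_mul, hΛ1 h hmem, one_mul]
      -- monotonicity of Vhat at level h
      have VhatMono : ∀ b b', b ≤ b' → b' ≤ L*H → ∀ θ, Vhat h b θ ≤ Vhat h b' θ := by
        intro b b' hbb hb' θ
        obtain ⟨⟨a, ⟨har, had⟩, hav⟩, -⟩ := hVmax h hmem b (le_trans hbb hb') θ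
        have hub := (hVmax h hmem b' hb' θ).2 ⟨a, ⟨har, le_trans had hbb⟩, rfl⟩
        have hpa := hp θ a
        have m1 : Uhat (h+1) (b - d θ a) ≤ Uhat (h+1) (b' - d θ a) :=
          ihM _ _ (Nat.sub_le_sub_right hbb _) (le_trans (Nat.sub_le _ _) hb')
        have m2 : Uhat (h+1) b ≤ Uhat (h+1) b' := ihM b b' hbb hb'
        rw [← hav]
        refine le_trans ?_ hub
        simp only
        have f1 := mul_le_mul_of_nonneg_left m1 hpa.1
        have f2 := mul_le_mul_of_nonneg_left m2 (by linarith [hpa.2] : (0:ℝ) ≤ 1 - p θ a)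
        linarith
      -- monotonicity of Uhat at level h
      have Mono : ∀ b b', b ≤ b' → b' ≤ L*H → Uhat h b ≤ Uhat h b' := by
        intro b b' hbb hb'
        rw [hUdef h hmem b (le_trans hbb hb'), hUdef h hmem b' hb']
        apply min_le_min
        · apply div_le_div_of_nonneg_right ?_ cardS.le
          exact Finset.sum_le_sum (fun s _ => VhatMono b b' hbb hb' (θs h s))
        · have : ((min b (H-h+1) : ℕ):ℝ) ≤ ((min b' (H-h+1) : ℕ):ℝ) := by
            exact_mod_cast (by omega : min b (H-h+1) ≤ min b' (H-h+1))
          exact mul_le_mul_of_nonneg_right this (le_of_lt hrmax)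
      -- optimism at the V level
      have Vopt : ∀ b ≤ L*H, ∀ θ, V h b θ ≤ Vhat h b θ + (n:ℝ) * ε := by
        intro b hb θ
        obtain ⟨⟨a, ⟨har, had⟩, hav⟩, -⟩ := hVmaxT h hmem b hb θ
        have hub := (hVmax h hmem b hb θ).2 ⟨a, ⟨har, had⟩, rfl⟩
        simp only at hub
        have o1 : U (h+1) (b - d θ a) ≤ Uhat (h+1) (b - d θ a) + (n:ℝ) * ε :=
          ihO _ (le_trans (Nat.sub_le _ _) hb)
        have o2 : U (h+1) b ≤ Uhat (h+1) b + (n:ℝ) * ε := ihO b hb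
        have m : Uhat (h+1) (b - d θ a) ≤ Uhat (h+1) b :=
          ihM (b - d θ a) b (Nat.sub_le _ _) hb
        have hρa := hρ θ a
        have hav' : ρ θ a * r θ a + ρ θ a * U (h+1) (b - d θ a)
            + (1 - ρ θ a) * U (h+1) b = V h b θ := hav
        rw [← hav']
        have f1 := mul_le_mul_of_nonneg_left o1 hρa.1
        have f2 := mul_le_mul_of_nonneg_left o2 (by linarith [hρa.2] : (0:ℝ) ≤ 1 - ρ θ a)
        have f3 : (0:ℝ) ≤ (ρ θ a - p θ a) * (Uhat (h+1) b - Uhat (h+1) (b - d θ a)) :=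
          mul_nonneg (by linarith [hpρ θ a]) (by linarith)
        have f4 : (0:ℝ) ≤ (q θ a - ρ θ a) * r θ a :=
          mul_nonneg (by linarith [hρq θ a]) har
        nlinarith [f1, f2, f3, f4]
      -- optimism at the U level
      have Opt : ∀ b ≤ L*H, U h b ≤ Uhat h b + ((n:ℝ)+1) * ε := by
        intro b hb
        rw [hUdef h hmem b hb]
        have hcap : ((min b (H-h+1) : ℕ):ℝ) = ((min b (n+1) : ℕ):ℝ) := by
          congr 1; omega
        have h2 : U h b ≤ ((min b (H-h+1) : ℕ):ℝ) * rmax + ((n:ℝ)+1) * ε := by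
          rw [hcap]
          nlinarith [Ucap b hb]
        have hsum : (∑ s : S, V h b (θs h s))
            ≤ (∑ s : S, Vhat h b (θs h s)) + (Fintype.card S : ℝ) * ((n:ℝ) * ε) := by
          calc (∑ s : S, V h b (θs h s))
              ≤ ∑ s : S, (Vhat h b (θs h s) + (n:ℝ) * ε) :=
                Finset.sum_le_sum (fun s _ => Vopt b hb (θs h s))
            _ = (∑ s : S, Vhat h b (θs h s)) + (Fintype.card S : ℝ) * ((n:ℝ) * ε) := by
                rw [Finset.sum_add_distrib, Finset.sum_const, Finset.card_univ,
                  nsmul_eq_mul]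
        have hdiv : (∑ s : S, V h b (θs h s)) / (Fintype.card S : ℝ)
            ≤ (∑ s : S, Vhat h b (θs h s)) / (Fintype.card S : ℝ) + (n:ℝ) * ε := by
          have h0 := div_le_div_of_nonneg_right hsum cardS.le
          have heq : ((∑ s : S, Vhat h b (θs h s))
              + (Fintype.card S : ℝ) * ((n:ℝ) * ε)) / (Fintype.card S : ℝ)
              = (∑ s : S, Vhat h b (θs h s)) / (Fintype.card S : ℝ) + (n:ℝ) * ε := by
            field_simp
          rwa [heq] at h0
        have h1 : U h b ≤ (∑ s : S, Vhat h b (θs h s)) / (Fintype.card S : ℝ)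
            + ((n:ℝ)+1) * ε := by
          have := hemp h hmem b hb
          linarith
        calc U h b ≤ min ((∑ s : S, Vhat h b (θs h s)) / (Fintype.card S : ℝ)
              + ((n:ℝ)+1) * ε)
              (((min b (H-h+1) : ℕ):ℝ) * rmax + ((n:ℝ)+1) * ε) := le_min h1 h2
          _ = min ((∑ s : S, Vhat h b (θs h s)) / (Fintype.card S : ℝ))
              (((min b (H-h+1) : ℕ):ℝ) * rmax) + ((n:ℝ)+1) * ε := by
              rw [min_add_add_right]
        -- done
      refine ⟨Mono, Ucap, ?_⟩
      intro b hb
      have := Opt b hb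
      push_cast
      linarith
  have part1 : ∀ h ∈ Finset.Icc 1 H, ∀ b ≤ L * H,
      U h b ≤ Uhat h b + ((H - h + 1 : ℕ) : ℝ) * ε := by
    intro h hmem b hb
    obtain ⟨h1, h2⟩ := Finset.mem_Icc.mp hmem
    have hn : H + 1 - h ≤ H := by omega
    have := (main (H + 1 - h) hn).2.2
    have heq : H + 1 - (H + 1 - h) = h := by omega
    rw [heq] at this
    have hb' := this b hb
    have hco : ((H + 1 - h : ℕ):ℝ) = ((H - h + 1 : ℕ):ℝ) := by
      congr 1; omega
    rw [hco] at hb'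
    exact hb'
  refine ⟨part1, ?_⟩
  intro b hb
  have := part1 1 (Finset.mem_Icc.mpr ⟨le_refl 1, hH⟩) b hb
  have hco : ((H - 1 + 1 : ℕ):ℝ) = (H:ℝ) := by
    congr 1; omega
  rwa [hco] at this
end

section
/- Per-step regret decomposition for the Mimic-Opt-DP action rule: let ρ : Θ × 𝒜 → [0,1] and suppose p(θ,a) ≤ ρ(θ,a) ≤ q(θ,a) for all (θ,a). Fix h ∈ {1,…,H}, b ∈ {0,…,LH}, θ ∈ Θ, and let A ∈ 𝒜(b,θ) be a maximizer over 𝒜(b,θ) of the map a ↦ q(θ,a)·r(θ,a) + p(θ,a)·Û_{h+1}(b − d(θ,a)) + (1 − p(θ,a))·Û_{h+1}(b). Then for every y ∈ {0,1}: Û_h(b) − q(θ,A)·r(θ,A) ≤ Û_{h+1}(b − y·d(θ,A)) + [ (1/|S|)·Σ_{s∈S} V̂_h(b, θ_{h,s}) − V̂_h(b,θ) ] + 2·r_max·L·( q(θ,A) − p(θ,A) ) + Ξ, where Ξ = ρ(θ,A)·Û_{h+1}(b − d(θ,A)) + (1 − ρ(θ,A))·Û_{h+1}(b) − Û_{h+1}(b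 − y·d(θ,A)). -/
/-- Per-step regret decomposition for the Mimic-Opt-DP action rule.
If `p ≤ ρ ≤ q` pointwise and `A ∈ 𝒜(b,θ)` maximizes the optimistic index
`a ↦ q(θ,a)·r(θ,a) + p(θ,a)·Û_{h+1}(b − d(θ,a)) + (1 − p(θ,a))·Û_{h+1}(b)`, then for
every `y ∈ {0,1}`:
`Û_h(b) − q(θ,A)·r(θ,A) ≤ Û_{h+1}(b − y·d(θ,A)) + [avg_s V̂_h(b,θ_{h,s}) − V̂_h(b,θ)]
  + 2·r_max·L·(q(θ,A) − p(θ,A)) + Ξ`, where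
`Ξ = ρ(θ,A)·Û_{h+1}(b − d(θ,A)) + (1 − ρ(θ,A))·Û_{h+1}(b) − Û_{h+1}(b − y·d(θ,A))`. -/
theorem mimic_opt_dp_per_step_regret
    {Θ 𝒜 : Type*} [Fintype Θ] [Fintype 𝒜] [Nonempty Θ] [Nonempty 𝒜]
    (θnull : Θ) (anull : 𝒜)
    (H L : ℕ) (hH : 0 < H) (hL : 0 < L)
    (rmax : ℝ) (hrmax : 0 < rmax)
    (r : Θ → 𝒜 → ℝ) (hr_le : ∀ θ a, r θ a ≤ rmax) (hr_null : ∀ θ, r θ anull = 0)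
    (d : Θ → 𝒜 → ℕ) (hd_le : ∀ θ a, d θ a ≤ L) (hd_null : ∀ θ, d θ anull = 0)
    (ρ p q : Θ → 𝒜 → ℝ)
    (hρ : ∀ θ a, ρ θ a ∈ Set.Icc (0 : ℝ) 1)
    (hp : ∀ θ a, p θ a ∈ Set.Icc (0 : ℝ) 1) (hq : ∀ θ a, q θ a ∈ Set.Icc (0 : ℝ) 1)
    (hpρ : ∀ θ a, p θ a ≤ ρ θ a) (hρq : ∀ θ a, ρ θ a ≤ q θ a)
    {S : Type*} [Fintype S] [Nonempty S]
    (θs : ℕ → S → Θ)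
    (Vhat : ℕ → ℕ → Θ → ℝ) (Uhat : ℕ → ℕ → ℝ)
    (hUtop : ∀ b ≤ L * H, Uhat (H + 1) b = 0)
    (hVmax : ∀ h ∈ Finset.Icc 1 H, ∀ b ≤ L * H, ∀ θ : Θ,
      IsGreatest ((fun a => q θ a * r θ a + p θ a * Uhat (h + 1) (b - d θ a)
          + (1 - p θ a) * Uhat (h + 1) b) '' {a : 𝒜 | 0 ≤ r θ a ∧ d θ a ≤ b})
        (Vhat h b θ))
    (hUdef : ∀ h ∈ Finset.Icc 1 H, ∀ b ≤ L * H,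
      Uhat h b = min ((∑ s : S, Vhat h b (θs h s)) / (Fintype.card S : ℝ))
        (((min b (H - h + 1) : ℕ) : ℝ) * rmax))
    (h : ℕ) (hh : h ∈ Finset.Icc 1 H)
    (b : ℕ) (hb : b ≤ L * H)
    (θ : Θ) (A : 𝒜)
    (hA : 0 ≤ r θ A ∧ d θ A ≤ b)
    (hAopt : ∀ a : 𝒜, 0 ≤ r θ a → d θ a ≤ b →
      q θ a * r θ a + p θ a * Uhat (h + 1) (b - d θ a) + (1 - p θ a) * Uhat (h + 1) b
        ≤ q θ A * r θ A + p θ A * Uhat (h + 1) (b - d θ A)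
            + (1 - p θ A) * Uhat (h + 1) b) :
    ∀ y ∈ ({0, 1} : Set ℕ),
      Uhat h b - q θ A * r θ A ≤
        Uhat (h + 1) (b - y * d θ A)
          + ((∑ s : S, Vhat h b (θs h s)) / (Fintype.card S : ℝ) - Vhat h b θ)
          + 2 * rmax * (L : ℝ) * (q θ A - p θ A)
          + (ρ θ A * Uhat (h + 1) (b - d θ A) + (1 - ρ θ A) * Uhat (h + 1) b
              - Uhat (h + 1) (b - y * d θ A)) := by
  classical
  have hmemIcc := Finset.mem_Icc.mp hh
  -- Joint downward induction: nonnegativity and a Lipschitz-type bound for `Uhat`.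
  have aux : ∀ n h₀ : ℕ, h₀ + n = H + 1 → 1 ≤ h₀ →
      (∀ b' ≤ L * H, 0 ≤ Uhat h₀ b') ∧
      (∀ b₁ b₂ : ℕ, b₁ ≤ b₂ → b₂ ≤ L * H →
        Uhat h₀ b₂ ≤ Uhat h₀ b₁ + ((b₂ : ℝ) - (b₁ : ℝ) + (L : ℝ) - 1) * rmax) := by
    intro n
    induction n with
    | zero =>
      intro h₀ hsum _
      have hH1 : h₀ = H + 1 := by omega
      subst hH1
      constructor
      · intro b' hb'
        rw [hUtop b' hb']
      · intro b₁ b₂ h12 hb2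
        rw [hUtop b₂ hb2, hUtop b₁ (le_trans h12 hb2)]
        have h1 : (1 : ℝ) ≤ (L : ℝ) := by exact_mod_cast hL
        have h2 : (b₁ : ℝ) ≤ (b₂ : ℝ) := by exact_mod_cast h12
        nlinarith [hrmax.le]
    | succ n ih =>
      intro h₀ hsum h1
      have hh0 : h₀ ≤ H := by omega
      have hmem : h₀ ∈ Finset.Icc 1 H := Finset.mem_Icc.mpr ⟨h1, hh0⟩
      obtain ⟨hNN, hLip⟩ := ih (h₀ + 1) (by omega) (by omega)
      have hcard : (0 : ℝ) < (Fintype.card S : ℝ) := by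
        exact_mod_cast Fintype.card_pos
      have hL1 : (1 : ℝ) ≤ (L : ℝ) := by exact_mod_cast hL
      -- each V dominates the null action value
      have hVnull : ∀ b' ≤ L * H, ∀ θ' : Θ, Uhat (h₀ + 1) b' ≤ Vhat h₀ b' θ' := by
        intro b' hb' θ'
        have hm : anull ∈ {a : 𝒜 | 0 ≤ r θ' a ∧ d θ' a ≤ b'} := by
          refine ⟨le_of_eq (hr_null θ').symm, ?_⟩
          rw [hd_null θ']
          exact Nat.zero_le _
        have h2 := (hVmax h₀ hmem b' hb' θ').2 (Set.mem_image_of_mem _ hm)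
        have hval : q θ' anull * r θ' anull + p θ' anull * Uhat (h₀ + 1) (b' - d θ' anull)
            + (1 - p θ' anull) * Uhat (h₀ + 1) b' = Uhat (h₀ + 1) b' := by
          rw [hr_null θ', hd_null θ']
          simp only [Nat.sub_zero, mul_zero]
          ring
        rw [hval] at h2
        exact h2
      -- nonnegativity at h₀
      have hNN0 : ∀ b' ≤ L * H, 0 ≤ Uhat h₀ b' := by
        intro b' hb'
        rw [hUdef h₀ hmem b' hb']
        apply le_min
        · apply div_nonneg _ hcard.le
          apply Finset.sum_nonneg
          intro s _
          exact le_trans (hNN b' hb') (hVnull b' hb' (θs h₀ s))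
        · positivity
      refine ⟨hNN0, ?_⟩
      intro b₁ b₂ h12 hb2
      have hb1 : b₁ ≤ L * H := le_trans h12 hb2
      have hcast12 : (b₁ : ℝ) ≤ (b₂ : ℝ) := by exact_mod_cast h12
      rcases lt_or_ge b₁ L with hcase | hcase
      · -- small budget: use the cap on `Uhat h₀ b₂` and nonnegativity at `b₁`
        have hcap : Uhat h₀ b₂ ≤ ((min b₂ (H - h₀ + 1) : ℕ) : ℝ) * rmax := by
          rw [hUdef h₀ hmem b₂ hb2]; exact min_le_right _ _
        have hmin : ((min b₂ (H - h₀ + 1) : ℕ) : ℝ) ≤ (b₂ : ℝ) := by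
          exact_mod_cast Nat.min_le_left _ _
        have hb1L : (b₁ : ℝ) ≤ (L : ℝ) - 1 := by
          have : ((b₁ + 1 : ℕ) : ℝ) ≤ (L : ℝ) := by exact_mod_cast hcase
          push_cast at this
          linarith
        have h4 := hNN0 b₁ hb1
        nlinarith [hrmax.le, mul_le_mul_of_nonneg_right hmin hrmax.le]
      · -- large budget: every feasible action at b₂ is feasible at b₁ since d ≤ L ≤ b₁
        have hVdiff : ∀ θ' : Θ, Vhat h₀ b₂ θ' ≤ Vhat h₀ b₁ θ'
            + ((b₂ : ℝ) - (b₁ : ℝ) + (L : ℝ) - 1) * rmax := by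
          intro θ'
          obtain ⟨a₀, ha₀, heq⟩ := (hVmax h₀ hmem b₂ hb2 θ').1
          have hd₀ : d θ' a₀ ≤ b₁ := le_trans (hd_le θ' a₀) hcase
          have hub := (hVmax h₀ hmem b₁ hb1 θ').2
            (Set.mem_image_of_mem _ (show a₀ ∈ {a : 𝒜 | 0 ≤ r θ' a ∧ d θ' a ≤ b₁} from ⟨ha₀.1, hd₀⟩))
          have hlip1 : Uhat (h₀ + 1) (b₂ - d θ' a₀) ≤ Uhat (h₀ + 1) (b₁ - d θ' a₀)
              + ((b₂ : ℝ) - (b₁ : ℝ) + (L : ℝ) - 1) * rmax := by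
            have hthis := hLip (b₁ - d θ' a₀) (b₂ - d θ' a₀)
              (Nat.sub_le_sub_right h12 _) (le_trans (Nat.sub_le _ _) hb2)
            have e2 : ((b₂ - d θ' a₀ : ℕ) : ℝ) = (b₂ : ℝ) - (d θ' a₀ : ℝ) :=
              Nat.cast_sub (le_trans hd₀ h12)
            have e1 : ((b₁ - d θ' a₀ : ℕ) : ℝ) = (b₁ : ℝ) - (d θ' a₀ : ℝ) :=
              Nat.cast_sub hd₀
            rw [e1, e2] at hthis
            linarith
          have hlip2 : Uhat (h₀ + 1) b₂ ≤ Uhat (h₀ + 1) b₁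
              + ((b₂ : ℝ) - (b₁ : ℝ) + (L : ℝ) - 1) * rmax := hLip b₁ b₂ h12 hb2
          have hp0 := (hp θ' a₀).1
          have hp1 := (hp θ' a₀).2
          have h5 := mul_le_mul_of_nonneg_left hlip1 hp0
          have h6 := mul_le_mul_of_nonneg_left hlip2 (by linarith : (0:ℝ) ≤ 1 - p θ' a₀)
          have heq' : q θ' a₀ * r θ' a₀ + p θ' a₀ * Uhat (h₀ + 1) (b₂ - d θ' a₀)
              + (1 - p θ' a₀) * Uhat (h₀ + 1) b₂ = Vhat h₀ b₂ θ' := heq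
          rw [← heq']
          linarith [h5, h6, hub]
        rw [hUdef h₀ hmem b₂ hb2, hUdef h₀ hmem b₁ hb1]
        set C : ℝ := ((b₂ : ℝ) - (b₁ : ℝ) + (L : ℝ) - 1) * rmax with hC
        have havg : (∑ s : S, Vhat h₀ b₂ (θs h₀ s)) / (Fintype.card S : ℝ)
            ≤ (∑ s : S, Vhat h₀ b₁ (θs h₀ s)) / (Fintype.card S : ℝ) + C := by
          have hsum : (∑ s : S, Vhat h₀ b₂ (θs h₀ s))
              ≤ ∑ s : S, (Vhat h₀ b₁ (θs h₀ s) + C) :=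
            Finset.sum_le_sum (fun s _ => hVdiff (θs h₀ s))
          rw [Finset.sum_add_distrib, Finset.sum_const, Finset.card_univ,
            nsmul_eq_mul] at hsum
          calc (∑ s : S, Vhat h₀ b₂ (θs h₀ s)) / (Fintype.card S : ℝ)
              ≤ ((∑ s : S, Vhat h₀ b₁ (θs h₀ s)) + (Fintype.card S : ℝ) * C)
                  / (Fintype.card S : ℝ) := (div_le_div_iff_of_pos_right hcard).mpr hsum
            _ = (∑ s : S, Vhat h₀ b₁ (θs h₀ s)) / (Fintype.card S : ℝ) + C := by
                rw [add_div, mul_div_cancel_left₀ _ (ne_of_gt hcard)]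
        have hcapd : ((min b₂ (H - h₀ + 1) : ℕ) : ℝ) * rmax
            ≤ ((min b₁ (H - h₀ + 1) : ℕ) : ℝ) * rmax + C := by
          have hn : (min b₂ (H - h₀ + 1)) + b₁ ≤ (min b₁ (H - h₀ + 1)) + b₂ := by omega
          have hn' : ((min b₂ (H - h₀ + 1) : ℕ) : ℝ) + (b₁ : ℝ)
              ≤ ((min b₁ (H - h₀ + 1) : ℕ) : ℝ) + (b₂ : ℝ) := by exact_mod_cast hn
          rw [hC]
          nlinarith [hrmax.le]
        calc min ((∑ s : S, Vhat h₀ b₂ (θs h₀ s)) / (Fintype.card S : ℝ))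
              (((min b₂ (H - h₀ + 1) : ℕ) : ℝ) * rmax)
            ≤ min ((∑ s : S, Vhat h₀ b₁ (θs h₀ s)) / (Fintype.card S : ℝ) + C)
              (((min b₁ (H - h₀ + 1) : ℕ) : ℝ) * rmax + C) := min_le_min havg hcapd
          _ = min ((∑ s : S, Vhat h₀ b₁ (θs h₀ s)) / (Fintype.card S : ℝ))
              (((min b₁ (H - h₀ + 1) : ℕ) : ℝ) * rmax) + C := min_add_add_right _ _ _
  -- instantiate the induction at level h+1
  obtain ⟨hNN, hLip⟩ := aux (H - h) (h + 1) (by omega) (by omega)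
  have hL1 : (1 : ℝ) ≤ (L : ℝ) := by exact_mod_cast hL
  -- key budget bound
  have hdiff : Uhat (h + 1) b - Uhat (h + 1) (b - d θ A) ≤ 2 * rmax * (L : ℝ) := by
    have hlip := hLip (b - d θ A) b (Nat.sub_le _ _) hb
    have e1 : ((b - d θ A : ℕ) : ℝ) = (b : ℝ) - (d θ A : ℝ) := Nat.cast_sub hA.2
    rw [e1] at hlip
    have hdL : (d θ A : ℝ) ≤ (L : ℝ) := by exact_mod_cast hd_le θ A
    nlinarith [hrmax.le]
  -- V at (b, θ) is bounded by the index of A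
  have hVle : Vhat h b θ ≤ q θ A * r θ A + p θ A * Uhat (h + 1) (b - d θ A)
      + (1 - p θ A) * Uhat (h + 1) b := by
    obtain ⟨a₀, ha₀, heq⟩ := (hVmax h hh b hb θ).1
    rw [← heq]
    exact hAopt a₀ ha₀.1 ha₀.2
  -- Uhat is below the average
  have hUavg : Uhat h b ≤ (∑ s : S, Vhat h b (θs h s)) / (Fintype.card S : ℝ) := by
    rw [hUdef h hh b hb]
    exact min_le_left _ _
  -- the exploration-bonus inequality
  have hbonus : (ρ θ A - p θ A) * (Uhat (h + 1) b - Uhat (h + 1) (b - d θ A))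
      ≤ 2 * rmax * (L : ℝ) * (q θ A - p θ A) := by
    have h0ρp : (0 : ℝ) ≤ ρ θ A - p θ A := by linarith [hpρ θ A]
    have hρpqp : ρ θ A - p θ A ≤ q θ A - p θ A := by linarith [hρq θ A]
    have h0qp : (0 : ℝ) ≤ q θ A - p θ A := le_trans h0ρp hρpqp
    rcases le_total (Uhat (h + 1) b) (Uhat (h + 1) (b - d θ A)) with hc | hc
    · have l1 : (ρ θ A - p θ A) * (Uhat (h + 1) b - Uhat (h + 1) (b - d θ A)) ≤ 0 :=
        mul_nonpos_of_nonneg_of_nonpos h0ρp (by linarith)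
      have l2 : (0 : ℝ) ≤ 2 * rmax * (L : ℝ) * (q θ A - p θ A) := by
        apply mul_nonneg _ h0qp
        positivity
      linarith
    · have := mul_le_mul hρpqp hdiff (by linarith) h0qp
      nlinarith
  intro y _
  linarith [hUavg, hVle, hbonus]
end

section
/- Episode-level regret decomposition for the Mimic-Opt-DP action rule: let ρ : Θ × 𝒜 → [0,1] and suppose p(θ,a) ≤ ρ(θ,a) ≤ q(θ,a) for all (θ,a). Consider any episode trajectory: a starting budget b_1 ∈ {0,…,LH}, contexts θ_1, …, θ_H ∈ Θ, outcomes y_1, …, y_H ∈ {0,1}, and actions A_1, …, A_H with A_h ∈ 𝒜(b_h, θ_h) a maximizer over 𝒜(b_h,θ_h) of a ↦ q(θ_h,a)·r(θ_h,a) + p(θ_h,a)·Û_{h+1}(b_h − d(θ_h,a)) + (1 − p(θ_h,a))·Û_{h+1}(b_h), and budgets updated by b_{h+1} = b_h − y_h·d(θ_h, A_h). Then Û_1(b_1) − Σ_{h=1}^H ρ(θ_h,A_h)·r(θ_h,A_h) ≤ Σ_{h=1}^H [ (1/|S|)·Σ_{s∈S} V̂_h(b_h, θ_{h,s}) − V̂_h(b_h,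 θ_h) ] + (2L+1)·r_max·Σ_{h=1}^H ( q(θ_h,A_h) − p(θ_h,A_h) ) + Σ_{h=1}^H Ξ_h, where Ξ_h = ρ(θ_h,A_h)·Û_{h+1}(b_h − d(θ_h,A_h)) + (1 − ρ(θ_h,A_h))·Û_{h+1}(b_h) − Û_{h+1}(b_{h+1}). -/
/-- Episode-level regret decomposition for the Mimic-Opt-DP action rule.
Along any trajectory with starting budget `b_1 ≤ LH`, contexts `θ_h`, binary outcomes
`y_h`, greedy optimistic actions `A_h ∈ 𝒜(b_h, θ_h)` and budgets
`b_{h+1} = b_h − y_h·d(θ_h, A_h)`, one has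
`Û_1(b_1) − Σ_h ρ(θ_h,A_h)·r(θ_h,A_h) ≤ Σ_h [avg_s V̂_h(b_h, θ_{h,s}) − V̂_h(b_h, θ_h)]
  + (2L+1)·r_max·Σ_h (q(θ_h,A_h) − p(θ_h,A_h)) + Σ_h Ξ_h`, with
`Ξ_h = ρ(θ_h,A_h)·Û_{h+1}(b_h − d(θ_h,A_h)) + (1 − ρ(θ_h,A_h))·Û_{h+1}(b_h) − Û_{h+1}(b_{h+1})`. -/
theorem mimic_opt_dp_episode_regret
    {Θ 𝒜 : Type*} [Fintype Θ] [Fintype 𝒜] [Nonempty Θ] [Nonempty 𝒜]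
    (θnull : Θ) (anull : 𝒜)
    (H L : ℕ) (hH : 0 < H) (hL : 0 < L)
    (rmax : ℝ) (hrmax : 0 < rmax)
    (r : Θ → 𝒜 → ℝ) (hr_le : ∀ θ a, r θ a ≤ rmax) (hr_null : ∀ θ, r θ anull = 0)
    (d : Θ → 𝒜 → ℕ) (hd_le : ∀ θ a, d θ a ≤ L) (hd_null : ∀ θ, d θ anull = 0)
    (ρ p q : Θ → 𝒜 → ℝ)
    (hρ : ∀ θ a, ρ θ a ∈ Set.Icc (0 : ℝ) 1)
    (hp : ∀ θ a, p θ a ∈ Set.Icc (0 : ℝ) 1) (hq : ∀ θ a, q θ a ∈ Set.Icc (0 : ℝ) 1)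
    (hpρ : ∀ θ a, p θ a ≤ ρ θ a) (hρq : ∀ θ a, ρ θ a ≤ q θ a)
    {S : Type*} [Fintype S] [Nonempty S]
    (θs : ℕ → S → Θ)
    (Vhat : ℕ → ℕ → Θ → ℝ) (Uhat : ℕ → ℕ → ℝ)
    (hUtop : ∀ b ≤ L * H, Uhat (H + 1) b = 0)
    (hVmax : ∀ h ∈ Finset.Icc 1 H, ∀ b ≤ L * H, ∀ θ : Θ,
      IsGreatest ((fun a => q θ a * r θ a + p θ a * Uhat (h + 1) (b - d θ a)
          + (1 - p θ a) * Uhat (h + 1) b) '' {a : 𝒜 | 0 ≤ r θ a ∧ d θ a ≤ b})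
        (Vhat h b θ))
    (hUdef : ∀ h ∈ Finset.Icc 1 H, ∀ b ≤ L * H,
      Uhat h b = min ((∑ s : S, Vhat h b (θs h s)) / (Fintype.card S : ℝ))
        (((min b (H - h + 1) : ℕ) : ℝ) * rmax))
    (bt : ℕ → ℕ) (ctx : ℕ → Θ) (y : ℕ → ℕ) (act : ℕ → 𝒜)
    (hb1 : bt 1 ≤ L * H)
    (hy : ∀ h ∈ Finset.Icc 1 H, y h = 0 ∨ y h = 1)
    (hfeas : ∀ h ∈ Finset.Icc 1 H, 0 ≤ r (ctx h) (act h) ∧ d (ctx h) (act h) ≤ bt h)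
    (hopt : ∀ h ∈ Finset.Icc 1 H, ∀ a : 𝒜, 0 ≤ r (ctx h) a → d (ctx h) a ≤ bt h →
      q (ctx h) a * r (ctx h) a + p (ctx h) a * Uhat (h + 1) (bt h - d (ctx h) a)
          + (1 - p (ctx h) a) * Uhat (h + 1) (bt h)
        ≤ q (ctx h) (act h) * r (ctx h) (act h)
            + p (ctx h) (act h) * Uhat (h + 1) (bt h - d (ctx h) (act h))
            + (1 - p (ctx h) (act h)) * Uhat (h + 1) (bt h))
    (hbud : ∀ h ∈ Finset.Icc 1 H, bt (h + 1) = bt h - y h * d (ctx h) (act h)) :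
    Uhat 1 (bt 1) - ∑ h ∈ Finset.Icc 1 H, ρ (ctx h) (act h) * r (ctx h) (act h) ≤
      (∑ h ∈ Finset.Icc 1 H,
          ((∑ s : S, Vhat h (bt h) (θs h s)) / (Fintype.card S : ℝ)
            - Vhat h (bt h) (ctx h)))
        + (2 * (L : ℝ) + 1) * rmax
            * ∑ h ∈ Finset.Icc 1 H, (q (ctx h) (act h) - p (ctx h) (act h))
        + ∑ h ∈ Finset.Icc 1 H,
            (ρ (ctx h) (act h) * Uhat (h + 1) (bt h - d (ctx h) (act h))
              + (1 - ρ (ctx h) (act h)) * Uhat (h + 1) (bt h)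
              - Uhat (h + 1) (bt (h + 1))) := by
  classical
  have hmono : ∀ h ∈ Finset.Icc 1 H, bt (h + 1) ≤ bt h := by
    intro h hh; rw [hbud h hh]; exact Nat.sub_le _ _
  have hble : ∀ h, 1 ≤ h → h ≤ H + 1 → bt h ≤ L * H := by
    intro h
    induction h with
    | zero => intro h1 _; omega
    | succ n ih =>
      intro _ hle
      rcases Nat.eq_zero_or_pos n with hn | hn
      · subst hn; exact hb1
      · exact le_trans (hmono n (Finset.mem_Icc.mpr ⟨hn, by omega⟩)) (ih hn (by omega))
  have hcard : (0 : ℝ) < (Fintype.card S : ℝ) := by exact_mod_cast Fintype.card_pos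
  -- key facts about Uhat by downward induction
  have key : ∀ k h, h + k = H + 1 → 1 ≤ h →
      (∀ b ≤ L * H, 0 ≤ Uhat h b) ∧
      (∀ b ≤ L * H, Uhat h b ≤ (b : ℝ) * rmax) ∧
      (∀ b' b, b' ≤ b → b ≤ L * H →
        Uhat h b - Uhat h b' ≤ (((b - b' : ℕ) : ℝ) + (L : ℝ)) * rmax) := by
    intro k
    induction k with
    | zero =>
      intro h hk h1
      have hh : h = H + 1 := by omega
      subst hh
      refine ⟨?_, ?_, ?_⟩
      · intro b hb; rw [hUtop b hb]
      · intro b hb; rw [hUtop b hb]; positivity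
      · intro b' b hb' hb
        rw [hUtop b hb, hUtop b' (le_trans hb' hb)]
        have : (0 : ℝ) ≤ (((b - b' : ℕ) : ℝ) + (L : ℝ)) * rmax := by positivity
        linarith
    | succ k ih =>
      intro h hk h1
      have hhH : h ≤ H := by omega
      have hmem : h ∈ Finset.Icc 1 H := Finset.mem_Icc.mpr ⟨h1, hhH⟩
      obtain ⟨ih0, ih1, ih2⟩ := ih (h + 1) (by omega) (by omega)
      have hVlb : ∀ b ≤ L * H, ∀ θ : Θ, Uhat (h + 1) b ≤ Vhat h b θ := by
        intro b hb θ
        have hnull : anull ∈ {a : 𝒜 | 0 ≤ r θ a ∧ d θ a ≤ b} := by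
          refine ⟨by rw [hr_null], by rw [hd_null]; exact Nat.zero_le _⟩
        have h2 : q θ anull * r θ anull + p θ anull * Uhat (h + 1) (b - d θ anull)
            + (1 - p θ anull) * Uhat (h + 1) b ≤ Vhat h b θ :=
          (hVmax h hmem b hb θ).2 ⟨anull, hnull, rfl⟩
        rw [hr_null, hd_null] at h2
        simp only [Nat.sub_zero, mul_zero] at h2
        nlinarith [h2]
      have hVlip : ∀ θ : Θ, ∀ b' b, b' ≤ b → b ≤ L * H →
          Vhat h b θ - Vhat h b' θ ≤ (((b - b' : ℕ) : ℝ) + (L : ℝ)) * rmax := by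
        intro θ b' b hbb hb
        have hb'le : b' ≤ L * H := le_trans hbb hb
        obtain ⟨a, ha, hVa0⟩ := (hVmax h hmem b hb θ).1
        obtain ⟨hra, hda⟩ := ha
        have hVa : q θ a * r θ a + p θ a * Uhat (h + 1) (b - d θ a)
            + (1 - p θ a) * Uhat (h + 1) b = Vhat h b θ := hVa0
        have hpa := Set.mem_Icc.mp (hp θ a)
        by_cases hcase : d θ a ≤ b'
        · have hfb' : q θ a * r θ a + p θ a * Uhat (h + 1) (b' - d θ a)
              + (1 - p θ a) * Uhat (h + 1) b' ≤ Vhat h b' θ :=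
            (hVmax h hmem b' hb'le θ).2 ⟨a, ⟨hra, hcase⟩, rfl⟩
          have l1 : Uhat (h + 1) (b - d θ a) - Uhat (h + 1) (b' - d θ a)
              ≤ (((b - b' : ℕ) : ℝ) + (L : ℝ)) * rmax := by
            have h3 := ih2 (b' - d θ a) (b - d θ a) (by omega) (by omega)
            have e : (b - d θ a) - (b' - d θ a) = b - b' := by omega
            rwa [e] at h3
          have l2 : Uhat (h + 1) b - Uhat (h + 1) b'
              ≤ (((b - b' : ℕ) : ℝ) + (L : ℝ)) * rmax := ih2 b' b hbb hb
          have m1 := mul_le_mul_of_nonneg_left l1 hpa.1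
          have m2 := mul_le_mul_of_nonneg_left l2 (by linarith [hpa.2] : (0:ℝ) ≤ 1 - p θ a)
          linarith [hfb', m1, m2]
        · have hVb' : (0 : ℝ) ≤ Vhat h b' θ :=
            le_trans (ih0 b' hb'le) (hVlb b' hb'le θ)
          have hqa := Set.mem_Icc.mp (hq θ a)
          have hqr : q θ a * r θ a ≤ rmax := by
            nlinarith [hr_le θ a, hra, hqa.1, hqa.2]
          have hU1 : Uhat (h + 1) (b - d θ a) ≤ ((b - d θ a : ℕ) : ℝ) * rmax :=
            ih1 _ (by omega)
          have hU2 : Uhat (h + 1) b ≤ (b : ℝ) * rmax := ih1 b hb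
          have m3 : ((b - d θ a : ℕ) : ℝ) ≤ (b : ℝ) := by
            exact_mod_cast Nat.sub_le b (d θ a)
          have m1 := mul_le_mul_of_nonneg_left hU1 hpa.1
          have m2 := mul_le_mul_of_nonneg_left hU2
            (by linarith [hpa.2] : (0:ℝ) ≤ 1 - p θ a)
          have m4 : p θ a * (((b - d θ a : ℕ) : ℝ) * rmax) ≤ p θ a * ((b : ℝ) * rmax) :=
            mul_le_mul_of_nonneg_left (mul_le_mul_of_nonneg_right m3 hrmax.le) hpa.1
          have hbL : b + 1 ≤ (b - b') + L := by
            have := hd_le θ a; omega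
          have hbL' : (b : ℝ) + 1 ≤ ((b - b' : ℕ) : ℝ) + (L : ℝ) := by
            exact_mod_cast hbL
          have m5 : ((b : ℝ) + 1) * rmax ≤ (((b - b' : ℕ) : ℝ) + (L : ℝ)) * rmax :=
            mul_le_mul_of_nonneg_right hbL' hrmax.le
          linarith [hqr, m1, m2, m4, m5, hVb', hVa]
      refine ⟨?_, ?_, ?_⟩
      · intro b hb
        rw [hUdef h hmem b hb]
        refine le_min ?_ (by positivity)
        exact div_nonneg
          (Finset.sum_nonneg fun s _ => le_trans (ih0 b hb) (hVlb b hb _)) hcard.le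
      · intro b hb
        rw [hUdef h hmem b hb]
        refine le_trans (min_le_right _ _) ?_
        have : ((min b (H - h + 1) : ℕ) : ℝ) ≤ (b : ℝ) := by
          exact_mod_cast min_le_left b (H - h + 1)
        exact mul_le_mul_of_nonneg_right this hrmax.le
      · intro b' b hbb hb
        have hb'le : b' ≤ L * H := le_trans hbb hb
        rw [hUdef h hmem b hb, hUdef h hmem b' hb'le]
        set A := (∑ s : S, Vhat h b (θs h s)) / (Fintype.card S : ℝ) with hA
        set A' := (∑ s : S, Vhat h b' (θs h s)) / (Fintype.card S : ℝ) with hA'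
        set B := ((min b (H - h + 1) : ℕ) : ℝ) * rmax with hB
        set B' := ((min b' (H - h + 1) : ℕ) : ℝ) * rmax with hB'
        have hAA' : A - A' ≤ (((b - b' : ℕ) : ℝ) + (L : ℝ)) * rmax := by
          rw [hA, hA', div_sub_div_same, ← Finset.sum_sub_distrib]
          rw [div_le_iff₀ hcard]
          calc ∑ s : S, (Vhat h b (θs h s) - Vhat h b' (θs h s))
              ≤ ∑ _s : S, (((b - b' : ℕ) : ℝ) + (L : ℝ)) * rmax :=
                Finset.sum_le_sum fun s _ => hVlip _ b' b hbb hb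
            _ = (((b - b' : ℕ) : ℝ) + (L : ℝ)) * rmax * (Fintype.card S : ℝ) := by
                rw [Finset.sum_const, Finset.card_univ, nsmul_eq_mul]; ring
        have hBB' : B - B' ≤ (((b - b' : ℕ) : ℝ) + (L : ℝ)) * rmax := by
          have hnat : (min b (H - h + 1) : ℕ) ≤ min b' (H - h + 1) + (b - b') := by omega
          have hcast : ((min b (H - h + 1) : ℕ) : ℝ)
              ≤ ((min b' (H - h + 1) : ℕ) : ℝ) + ((b - b' : ℕ) : ℝ) := by
            exact_mod_cast hnat
          have hLr : (0 : ℝ) ≤ (L : ℝ) * rmax := by positivity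
          rw [hB, hB']
          nlinarith [hrmax.le, hcast, hLr]
        rcases le_total A' B' with hc | hc
        · rw [min_eq_left hc]
          have := min_le_left A B
          linarith
        · rw [min_eq_right hc]
          have := min_le_right A B
          linarith
  have Unn : ∀ h, 1 ≤ h → h ≤ H + 1 → ∀ b ≤ L * H, 0 ≤ Uhat h b :=
    fun h h1 h2 => (key (H + 1 - h) h (by omega) h1).1
  have Ulip : ∀ h, 1 ≤ h → h ≤ H + 1 → ∀ b' b, b' ≤ b → b ≤ L * H →
      Uhat h b - Uhat h b' ≤ (((b - b' : ℕ) : ℝ) + (L : ℝ)) * rmax :=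
    fun h h1 h2 => (key (H + 1 - h) h (by omega) h1).2.2
  -- per-step inequality
  have step : ∀ h ∈ Finset.Icc 1 H,
      Uhat h (bt h) - Uhat (h + 1) (bt (h + 1)) ≤
        ((∑ s : S, Vhat h (bt h) (θs h s)) / (Fintype.card S : ℝ)
            - Vhat h (bt h) (ctx h))
          + ρ (ctx h) (act h) * r (ctx h) (act h)
          + (2 * (L : ℝ) + 1) * rmax * (q (ctx h) (act h) - p (ctx h) (act h))
          + (ρ (ctx h) (act h) * Uhat (h + 1) (bt h - d (ctx h) (act h))
              + (1 - ρ (ctx h) (act h)) * Uhat (h + 1) (bt h)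
              - Uhat (h + 1) (bt (h + 1))) := by
    intro h hmem
    obtain ⟨h1, hH'⟩ := Finset.mem_Icc.mp hmem
    have hb : bt h ≤ L * H := hble h h1 (by omega)
    have hu1 : Uhat h (bt h)
        ≤ (∑ s : S, Vhat h (bt h) (θs h s)) / (Fintype.card S : ℝ) := by
      rw [hUdef h hmem (bt h) hb]; exact min_le_left _ _
    obtain ⟨a, ha, hVa0⟩ := (hVmax h hmem (bt h) hb (ctx h)).1
    have hVA : Vhat h (bt h) (ctx h)
        ≤ q (ctx h) (act h) * r (ctx h) (act h)
          + p (ctx h) (act h) * Uhat (h + 1) (bt h - d (ctx h) (act h))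
          + (1 - p (ctx h) (act h)) * Uhat (h + 1) (bt h) := by
      have hVa : q (ctx h) a * r (ctx h) a
          + p (ctx h) a * Uhat (h + 1) (bt h - d (ctx h) a)
          + (1 - p (ctx h) a) * Uhat (h + 1) (bt h) = Vhat h (bt h) (ctx h) := hVa0
      rw [← hVa]
      exact hopt h hmem a ha.1 ha.2
    have hfe := hfeas h hmem
    have hdiff : Uhat (h + 1) (bt h) - Uhat (h + 1) (bt h - d (ctx h) (act h))
        ≤ 2 * (L : ℝ) * rmax := by
      have hl := Ulip (h + 1) (by omega) (by omega)
        (bt h - d (ctx h) (act h)) (bt h) (Nat.sub_le _ _) hb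
      have e : bt h - (bt h - d (ctx h) (act h)) = d (ctx h) (act h) := by omega
      rw [e] at hl
      have hdl : ((d (ctx h) (act h) : ℕ) : ℝ) ≤ (L : ℝ) := by
        exact_mod_cast hd_le (ctx h) (act h)
      have : (((d (ctx h) (act h) : ℕ) : ℝ) + (L : ℝ)) * rmax ≤ 2 * (L : ℝ) * rmax :=
        mul_le_mul_of_nonneg_right (by linarith) hrmax.le
      linarith
    have hρa := Set.mem_Icc.mp (hρ (ctx h) (act h))
    have hpρ' := hpρ (ctx h) (act h)
    have hρq' := hρq (ctx h) (act h)
    have e1 : (q (ctx h) (act h) - ρ (ctx h) (act h)) * r (ctx h) (act h)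
        ≤ (q (ctx h) (act h) - p (ctx h) (act h)) * rmax := by
      have h0 : (0:ℝ) ≤ q (ctx h) (act h) - ρ (ctx h) (act h) := by linarith
      calc (q (ctx h) (act h) - ρ (ctx h) (act h)) * r (ctx h) (act h)
          ≤ (q (ctx h) (act h) - ρ (ctx h) (act h)) * rmax :=
            mul_le_mul_of_nonneg_left (hr_le _ _) h0
        _ ≤ (q (ctx h) (act h) - p (ctx h) (act h)) * rmax :=
            mul_le_mul_of_nonneg_right (by linarith) hrmax.le
    have e2 : (ρ (ctx h) (act h) - p (ctx h) (act h))
          * (Uhat (h + 1) (bt h) - Uhat (h + 1) (bt h - d (ctx h) (act h)))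
        ≤ (q (ctx h) (act h) - p (ctx h) (act h)) * (2 * (L : ℝ) * rmax) := by
      calc (ρ (ctx h) (act h) - p (ctx h) (act h))
            * (Uhat (h + 1) (bt h) - Uhat (h + 1) (bt h - d (ctx h) (act h)))
          ≤ (ρ (ctx h) (act h) - p (ctx h) (act h)) * (2 * (L : ℝ) * rmax) :=
            mul_le_mul_of_nonneg_left hdiff (by linarith)
        _ ≤ (q (ctx h) (act h) - p (ctx h) (act h)) * (2 * (L : ℝ) * rmax) :=
            mul_le_mul_of_nonneg_right (by linarith) (by positivity)
    nlinarith [hu1, hVA, e1, e2]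
  -- telescoping
  have hterm : Uhat (H + 1) (bt (H + 1)) = 0 := hUtop _ (hble (H + 1) (by omega) le_rfl)
  have htel : ∑ h ∈ Finset.Icc 1 H, (Uhat h (bt h) - Uhat (h + 1) (bt (h + 1)))
      = Uhat 1 (bt 1) - Uhat (H + 1) (bt (H + 1)) := by
    rw [← Finset.Ico_add_one_right_eq_Icc, Finset.sum_Ico_eq_sum_range]
    have e : H + 1 - 1 = H := by omega
    rw [e]
    calc ∑ i ∈ Finset.range H,
          (Uhat (1 + i) (bt (1 + i)) - Uhat (1 + i + 1) (bt (1 + i + 1)))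
        = ∑ i ∈ Finset.range H,
          ((fun n => Uhat (n + 1) (bt (n + 1))) i
            - (fun n => Uhat (n + 1) (bt (n + 1))) (i + 1)) := by
          refine Finset.sum_congr rfl fun i _ => ?_
          rw [Nat.add_comm 1 i]
      _ = Uhat (0 + 1) (bt (0 + 1)) - Uhat (H + 1) (bt (H + 1)) :=
          Finset.sum_range_sub' (fun n => Uhat (n + 1) (bt (n + 1))) H
  have hsum : Uhat 1 (bt 1)
      ≤ ∑ h ∈ Finset.Icc 1 H,
          (((∑ s : S, Vhat h (bt h) (θs h s)) / (Fintype.card S : ℝ)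
              - Vhat h (bt h) (ctx h))
            + ρ (ctx h) (act h) * r (ctx h) (act h)
            + (2 * (L : ℝ) + 1) * rmax * (q (ctx h) (act h) - p (ctx h) (act h))
            + (ρ (ctx h) (act h) * Uhat (h + 1) (bt h - d (ctx h) (act h))
                + (1 - ρ (ctx h) (act h)) * Uhat (h + 1) (bt h)
                - Uhat (h + 1) (bt (h + 1)))) := by
    have h5 := Finset.sum_le_sum step
    rw [htel, hterm] at h5
    linarith
  rw [Finset.mul_sum]
  simp only [Finset.sum_add_distrib] at hsum
  linarith [hsum]
end

section
/- Counting bound underlying the multi-armed confidence-width sums: let 𝒜 be a finite nonempty set with K = |𝒜| elements, let N be a positive integer, and let a_1, …, a_N ∈ 𝒜 be an arbitrary sequence. For n ∈ {1,…,N}, let m_n = #{ k ∈ {1,…,n−1} : a_k = a_n } be the number of earlier occurrences of a_n. Then Σ_{n=1}^N 1/√(max(m_n, 1)) ≤ K + 2·√(K·N). -/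
open Finset

lemma sqrt_step {y : ℝ} (hy : 1 ≤ y) :
    2 * Real.sqrt (y - 1) + 1 / Real.sqrt y ≤ 2 * Real.sqrt y := by
  have hy0 : (0:ℝ) ≤ y := by linarith
  have hy1 : (0:ℝ) ≤ y - 1 := by linarith
  have hu2 : (Real.sqrt y)^2 = y := Real.sq_sqrt hy0
  have hv2 : (Real.sqrt (y-1))^2 = y - 1 := Real.sq_sqrt hy1
  have hupos : 0 < Real.sqrt y := Real.sqrt_pos.mpr (by linarith)
  have hv0 : 0 ≤ Real.sqrt (y-1) := Real.sqrt_nonneg _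
  have h : 1 / Real.sqrt y ≤ 2 * Real.sqrt y - 2 * Real.sqrt (y-1) := by
    rw [div_le_iff₀ hupos]
    nlinarith [sq_nonneg (Real.sqrt y - Real.sqrt (y-1))]
  linarith

lemma aux_sum (S : Finset ℕ) :
    S.Nonempty →
    ∑ n ∈ S, (1:ℝ) / Real.sqrt (max ((S.filter fun k => k < n).card) 1)
      ≤ 1 + 2 * Real.sqrt ((S.card : ℝ) - 1) := by
  induction S using Finset.strongInduction with
  | _ S ih =>
    intro hne
    set M := S.max' hne with hM
    have hMmem : M ∈ S := S.max'_mem hne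
    have hsub : S.erase M ⊂ S := Finset.erase_ssubset hMmem
    -- term at M
    have hfiltM : S.filter (fun k => k < M) = S.erase M := by
      ext k
      simp only [mem_filter, mem_erase]
      constructor
      · rintro ⟨hk, hlt⟩; exact ⟨by omega, hk⟩
      · rintro ⟨hne', hk⟩
        exact ⟨hk, lt_of_le_of_ne (S.le_max' k hk) hne'⟩
    -- terms agree on erase
    have hterm : ∀ n ∈ S.erase M,
        (1:ℝ) / Real.sqrt (max ((S.filter fun k => k < n).card) 1)
        = (1:ℝ) / Real.sqrt (max (((S.erase M).filter fun k => k < n).card) 1) := by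
      intro n hn
      have hnM : n < M := lt_of_le_of_ne (S.le_max' n (mem_of_mem_erase hn))
        (Finset.ne_of_mem_erase hn)
      congr 2
      rw [Finset.filter_erase]
      rw [Finset.erase_eq_of_notMem]
      simp only [mem_filter]
      rintro ⟨-, h⟩; omega
    have hsplit : ∑ n ∈ S, (1:ℝ) / Real.sqrt (max ((S.filter fun k => k < n).card) 1)
        = (1:ℝ) / Real.sqrt (max ((S.erase M).card) 1)
          + ∑ n ∈ S.erase M,
            (1:ℝ) / Real.sqrt (max (((S.erase M).filter fun k => k < n).card) 1) := by
      rw [← Finset.add_sum_erase _ _ hMmem, hfiltM]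
      congr 1
      exact Finset.sum_congr rfl hterm
    have hcard : (S.erase M).card = S.card - 1 := Finset.card_erase_of_mem hMmem
    have hc1 : 1 ≤ S.card := Finset.card_pos.mpr hne
    rcases Nat.lt_or_ge S.card 2 with hc | hc
    · -- card = 1
      have hc' : S.card = 1 := by omega
      have he : S.erase M = ∅ := Finset.card_eq_zero.mp (by omega)
      rw [hsplit, he]
      simp only [Finset.card_empty, Finset.sum_empty, hc', Nat.cast_zero, Nat.cast_one]
      rw [max_eq_right (by norm_num : (0:ℝ) ≤ 1)]
      simp [Real.sqrt_one]
    · -- card ≥ 2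
      have hne' : (S.erase M).Nonempty := Finset.card_pos.mp (by omega)
      have hih := ih (S.erase M) hsub hne'
      rw [hsplit]
      have hcast : ((S.erase M).card : ℝ) = (S.card : ℝ) - 1 := by
        rw [hcard]; push_cast [Nat.cast_sub hc1]; ring
      have hy : (1:ℝ) ≤ (S.card : ℝ) - 1 := by
        have : (2:ℝ) ≤ (S.card : ℝ) := by exact_mod_cast hc
        linarith
      rw [hcast, max_eq_left (by linarith)]
      have := sqrt_step hy
      rw [hcast] at hih
      linarith


/-- Counting bound underlying the multi-armed confidence-width sums.
For any sequence `a_1,…,a_N` in a finite set of `K` elements, letting `m_n` be the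
number of earlier occurrences of `a_n`, one has
`Σ_{n=1}^N 1/√(max(m_n,1)) ≤ K + 2·√(K·N)`. -/
theorem counting_confidence_width_sum
    {𝒜 : Type*} [Fintype 𝒜] [Nonempty 𝒜] [DecidableEq 𝒜]
    (N : ℕ) (hN : 0 < N) (a : ℕ → 𝒜) :
    ∑ n ∈ Finset.Icc 1 N,
        (1 : ℝ) / Real.sqrt (max (((Finset.Ico 1 n).filter fun k => a k = a n).card) 1)
      ≤ (Fintype.card 𝒜 : ℝ) + 2 * Real.sqrt ((Fintype.card 𝒜 : ℝ) * N) := by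
  classical
  set K := Fintype.card 𝒜 with hK
  set S : 𝒜 → Finset ℕ := fun b => (Finset.Icc 1 N).filter (fun k => a k = b) with hS
  -- fiberwise decomposition
  have hfib : ∑ n ∈ Finset.Icc 1 N,
      (1 : ℝ) / Real.sqrt (max (((Finset.Ico 1 n).filter fun k => a k = a n).card) 1)
      = ∑ b ∈ Finset.univ, ∑ n ∈ S b,
      (1 : ℝ) / Real.sqrt (max (((Finset.Ico 1 n).filter fun k => a k = a n).card) 1) := by
    rw [← Finset.sum_fiberwise_of_maps_to (fun x _ => Finset.mem_univ (a x))]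
  rw [hfib]
  -- rewrite inner terms
  have hinner : ∀ b, ∑ n ∈ S b,
      (1 : ℝ) / Real.sqrt (max (((Finset.Ico 1 n).filter fun k => a k = a n).card) 1)
      = ∑ n ∈ S b, (1:ℝ) / Real.sqrt (max (((S b).filter fun k => k < n).card) 1) := by
    intro b
    refine Finset.sum_congr rfl fun n hn => ?_
    simp only [hS, Finset.mem_filter, Finset.mem_Icc] at hn
    obtain ⟨⟨h1, h2⟩, h3⟩ := hn
    have hset : (Finset.Ico 1 n).filter (fun k => a k = a n)
        = (S b).filter (fun k => k < n) := by
      ext k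
      simp only [hS, Finset.mem_filter, Finset.mem_Ico, Finset.mem_Icc, h3, and_assoc]
      constructor
      · rintro ⟨u1, u2, u3⟩
        exact ⟨u1, by omega, u3, u2⟩
      · rintro ⟨u1, u2, u3, u4⟩
        exact ⟨u1, u4, u3⟩
    rw [hset]
  -- bound each fiber
  have hbound : ∀ b, ∑ n ∈ S b, (1:ℝ) / Real.sqrt (max (((S b).filter fun k => k < n).card) 1)
      ≤ 1 + 2 * Real.sqrt ((S b).card) := by
    intro b
    rcases (S b).eq_empty_or_nonempty with he | hne
    · rw [he]; simp
    · calc _ ≤ 1 + 2 * Real.sqrt (((S b).card : ℝ) - 1) := aux_sum (S b) hne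
        _ ≤ 1 + 2 * Real.sqrt ((S b).card) := by
            have := Real.sqrt_le_sqrt (show ((S b).card : ℝ) - 1 ≤ (S b).card by linarith)
            linarith
  have hsumcard : ∑ b ∈ Finset.univ, ((S b).card : ℝ) = (N : ℝ) := by
    have := Finset.card_eq_sum_card_fiberwise (fun x (_ : x ∈ Finset.Icc 1 N) => Finset.mem_univ (a x))
    have hN' : (Finset.Icc 1 N).card = N := by simp
    rw [hN'] at this
    rw [show ∑ b ∈ Finset.univ, ((S b).card : ℝ)
        = ((∑ b ∈ Finset.univ, (S b).card : ℕ) : ℝ) by push_cast; rfl]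
    rw [← this]
  -- Cauchy-Schwarz
  have hcs : ∑ b ∈ Finset.univ, Real.sqrt ((S b).card) ≤ Real.sqrt ((K : ℝ) * N) := by
    have h1 : (∑ b ∈ Finset.univ, Real.sqrt ((S b).card) * 1)^2
        ≤ (∑ b ∈ Finset.univ, (Real.sqrt ((S b).card))^2) * (∑ b ∈ Finset.univ, (1:ℝ)^2) :=
      Finset.sum_mul_sq_le_sq_mul_sq _ _ _
    simp only [mul_one, one_pow] at h1
    have h2 : ∑ b ∈ Finset.univ, (Real.sqrt ((S b).card))^2 = (N : ℝ) := by
      rw [← hsumcard]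
      refine Finset.sum_congr rfl fun b _ => ?_
      exact Real.sq_sqrt (by positivity)
    have h3 : ∑ b ∈ (Finset.univ : Finset 𝒜), (1:ℝ) = (K : ℝ) := by simp [hK]
    rw [h2, h3] at h1
    have hnn : 0 ≤ ∑ b ∈ Finset.univ, Real.sqrt ((S b).card) :=
      Finset.sum_nonneg fun b _ => Real.sqrt_nonneg _
    rw [show (K:ℝ) * N = (N:ℝ) * K by ring]
    exact (Real.le_sqrt hnn (by positivity)).mpr (by linarith)
  calc ∑ b ∈ Finset.univ, ∑ n ∈ S b,
      (1 : ℝ) / Real.sqrt (max (((Finset.Ico 1 n).filter fun k => a k = a n).card) 1)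
      ≤ ∑ b ∈ Finset.univ, (1 + 2 * Real.sqrt ((S b).card)) := by
        refine Finset.sum_le_sum fun b _ => ?_
        rw [hinner b]; exact hbound b
    _ = (K : ℝ) + 2 * ∑ b ∈ Finset.univ, Real.sqrt ((S b).card) := by
        rw [Finset.sum_add_distrib, ← Finset.mul_sum]
        simp [hK]
    _ ≤ (K : ℝ) + 2 * Real.sqrt ((K : ℝ) * N) := by linarith
end
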